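/- arXiv:2401.12367 — 4 statements merged into one kernel-verified Lean document; each statement's English description precedes it below -/
import Mathlib

section
/- Let n ≥ 2 and r0 ≥ 0. Let h : {x ∈ ℝⁿ : |x| > r0} → ℝ and k1, k2 : {x ∈ ℝⁿ : |x| > r0} → (0,∞) be measurable, and assume that for every compactly supported C² function v : ℝⁿ → ℝ whose support is contained in {|x| > r0} the estimate ∫ v² k1 e^{h} dx + ∫ |∇v|² k2 e^{h} dx ≤ ∫ (Δv)² e^{h} dx holds (all integrals over {|x| > r0}). Then there exists a constant Λ = Λ(n) > 0 such that for every w ∈ C²(ℝⁿ) which vanishes on a neighborhood of the closed ball {|x| ≤ r0}, satisfies ∫_{|x|>r0} w²(1+k2) e^{h} dx < +∞, and satisfies ∫_{R<|x|<2R} |∇w|² e^{h} dx = o(R²) as R → +∞, one has ∫ w² k1 e^{h} dx + ∫ |∇w|² k2 e^{h} dx ≤ Λ ∫ (Δw)² e^{h} dx. -/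
open MeasureTheory Filter Real Set Asymptotics ENNReal Topology

/-- The Euclidean Laplacian: sum of second partial derivatives. -/
noncomputable def lapl {n : ℕ} (u : EuclideanSpace ℝ (Fin n) → ℝ)
    (x : EuclideanSpace ℝ (Fin n)) : ℝ :=
  ∑ i : Fin n, fderiv ℝ (fun y => fderiv ℝ u y (EuclideanSpace.single i 1)) x
    (EuclideanSpace.single i 1)

section Aux
open RealInnerProductSpace

variable {n : ℕ}

lemma eucl_repr (y : EuclideanSpace ℝ (Fin n)) :
    y = ∑ i, (y i) • EuclideanSpace.single i (1:ℝ) := by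
  ext j
  rw [WithLp.ofLp_sum, Finset.sum_apply]
  simp [EuclideanSpace.single_apply]

lemma clm_apply_eq_sum (L : EuclideanSpace ℝ (Fin n) →L[ℝ] ℝ) (y : EuclideanSpace ℝ (Fin n)) :
    L y = ∑ i, y i * L (EuclideanSpace.single i 1) := by
  conv_lhs => rw [eucl_repr y]
  rw [map_sum]
  simp [smul_eq_mul]

lemma inner_gradient (f : EuclideanSpace ℝ (Fin n) → ℝ) (x y : EuclideanSpace ℝ (Fin n)) :
    ⟪gradient f x, y⟫ = fderiv ℝ f x y := by
  rw [gradient]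
  exact InnerProductSpace.toDual_symm_apply

lemma norm_gradient_eq (f : EuclideanSpace ℝ (Fin n) → ℝ) (x : EuclideanSpace ℝ (Fin n)) :
    ‖gradient f x‖ = ‖fderiv ℝ f x‖ := by
  rw [gradient]
  exact LinearIsometryEquiv.norm_map _ _

lemma abs_fderiv_le (f : EuclideanSpace ℝ (Fin n) → ℝ) (x z : EuclideanSpace ℝ (Fin n)) :
    |fderiv ℝ f x z| ≤ ‖gradient f x‖ * ‖z‖ := by
  rw [norm_gradient_eq]
  exact (fderiv ℝ f x).le_opNorm z

lemma gradient_congr_nhds {f g : EuclideanSpace ℝ (Fin n) → ℝ} {x : EuclideanSpace ℝ (Fin n)}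
    (h : f =ᶠ[nhds x] g) : gradient f x = gradient g x := by
  rw [gradient, gradient, h.fderiv_eq]

lemma contDiff_fderiv_apply {u : EuclideanSpace ℝ (Fin n) → ℝ} (hu : ContDiff ℝ 2 u)
    (e : EuclideanSpace ℝ (Fin n)) : ContDiff ℝ 1 (fun y => fderiv ℝ u y e) :=
  (hu.fderiv_right (by norm_num)).clm_apply contDiff_const

lemma continuous_lapl {u : EuclideanSpace ℝ (Fin n) → ℝ} (hu : ContDiff ℝ 2 u) :
    Continuous (lapl u) := by
  unfold lapl
  refine continuous_finset_sum _ fun i _ => ?_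
  exact ((contDiff_fderiv_apply hu _).continuous_fderiv one_ne_zero).clm_apply continuous_const

lemma continuous_gradient {u : EuclideanSpace ℝ (Fin n) → ℝ} (hu : ContDiff ℝ 2 u) :
    Continuous (fun x => gradient u x) := by
  have : Continuous (fderiv ℝ u) := hu.continuous_fderiv (by norm_num)
  exact ((InnerProductSpace.toDual ℝ _).symm.continuous).comp this

lemma lapl_mul {u v : EuclideanSpace ℝ (Fin n) → ℝ} (hu : ContDiff ℝ 2 u)
    (hv : ContDiff ℝ 2 v) (x : EuclideanSpace ℝ (Fin n)) :
    lapl (fun y => u y * v y) x = u x * lapl v x + v x * lapl u x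
      + 2 * ∑ i, fderiv ℝ u x (EuclideanSpace.single i 1)
          * fderiv ℝ v x (EuclideanSpace.single i 1) := by
  have hud : Differentiable ℝ u := hu.differentiable two_ne_zero
  have hvd : Differentiable ℝ v := hv.differentiable two_ne_zero
  unfold lapl
  rw [Finset.mul_sum, Finset.mul_sum, Finset.mul_sum, ← Finset.sum_add_distrib,
    ← Finset.sum_add_distrib]
  refine Finset.sum_congr rfl fun i _ => ?_
  set e := EuclideanSpace.single i (1:ℝ) with he
  have hDu : ContDiff ℝ 1 (fun y => fderiv ℝ u y e) := contDiff_fderiv_apply hu e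
  have hDv : ContDiff ℝ 1 (fun y => fderiv ℝ v y e) := contDiff_fderiv_apply hv e
  have h1 : (fun y => fderiv ℝ (fun z => u z * v z) y e)
      = fun y => u y * fderiv ℝ v y e + v y * fderiv ℝ u y e := by
    funext y
    rw [fderiv_fun_mul (hud y) (hvd y)]
    simp [smul_eq_mul]
  rw [h1]
  have d1 : DifferentiableAt ℝ (fun y => u y * fderiv ℝ v y e) x :=
    (hud x).mul ((hDv.differentiable one_ne_zero) x)
  have d2 : DifferentiableAt ℝ (fun y => v y * fderiv ℝ u y e) x :=
    (hvd x).mul ((hDu.differentiable one_ne_zero) x)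
  rw [fderiv_fun_add d1 d2]
  simp only [ContinuousLinearMap.add_apply]
  rw [fderiv_fun_mul (hud x) ((hDv.differentiable one_ne_zero) x),
    fderiv_fun_mul (hvd x) ((hDu.differentiable one_ne_zero) x)]
  simp only [ContinuousLinearMap.add_apply, ContinuousLinearMap.smul_apply, smul_eq_mul]
  ring

lemma hasFDerivAt_Q (x : EuclideanSpace ℝ (Fin n)) :
    HasFDerivAt (fun y : EuclideanSpace ℝ (Fin n) => ⟪y, y⟫)
      ((fderivInnerCLM ℝ (x, x)).comp
        ((ContinuousLinearMap.id ℝ _).prod (ContinuousLinearMap.id ℝ _))) x :=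
  (hasFDerivAt_id x).inner ℝ (hasFDerivAt_id x)

lemma hasFDerivAt_radial {ψ : ℝ → ℝ} (hψ : Differentiable ℝ ψ)
    (x : EuclideanSpace ℝ (Fin n)) :
    HasFDerivAt (fun y : EuclideanSpace ℝ (Fin n) => ψ ⟪y, y⟫)
      (deriv ψ ⟪x, x⟫ • ((fderivInnerCLM ℝ (x, x)).comp
        ((ContinuousLinearMap.id ℝ _).prod (ContinuousLinearMap.id ℝ _)))) x :=
  HasDerivAt.comp_hasFDerivAt (f := fun y : EuclideanSpace ℝ (Fin n) => ⟪y, y⟫) x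
    ((hψ _).hasDerivAt) (hasFDerivAt_Q x)

lemma fderiv_radial_apply {ψ : ℝ → ℝ} (hψ : Differentiable ℝ ψ)
    (x e : EuclideanSpace ℝ (Fin n)) :
    fderiv ℝ (fun y : EuclideanSpace ℝ (Fin n) => ψ ⟪y, y⟫) x e
      = deriv ψ ⟪x, x⟫ * (2 * ⟪x, e⟫) := by
  rw [(hasFDerivAt_radial hψ x).fderiv]
  simp only [ContinuousLinearMap.smul_apply, ContinuousLinearMap.coe_comp',
    Function.comp_apply, ContinuousLinearMap.prod_apply, ContinuousLinearMap.coe_id', id_eq,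
    fderivInnerCLM_apply, smul_eq_mul]
  rw [real_inner_comm e x]
  ring

lemma d2_radial_apply {ψ : ℝ → ℝ} (hψ : ContDiff ℝ (⊤ : ℕ∞) ψ)
    (x e : EuclideanSpace ℝ (Fin n)) :
    fderiv ℝ (fun y => fderiv ℝ (fun z : EuclideanSpace ℝ (Fin n) => ψ ⟪z, z⟫) y e) x e
      = deriv (deriv ψ) ⟪x, x⟫ * (2 * ⟪x, e⟫) * (2 * ⟪x, e⟫)
        + deriv ψ ⟪x, x⟫ * (2 * ⟪e, e⟫) := by
  have hψd : Differentiable ℝ ψ := hψ.differentiable (by simp)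
  have hψ' : ContDiff ℝ (⊤ : ℕ∞) (deriv ψ) := (contDiff_infty_iff_deriv.mp hψ).2
  have hψ'd : Differentiable ℝ (deriv ψ) := hψ'.differentiable (by simp)
  have h1 : (fun y => fderiv ℝ (fun z : EuclideanSpace ℝ (Fin n) => ψ ⟪z, z⟫) y e)
      = fun y => deriv ψ ⟪y, y⟫ * (2 * ⟪y, e⟫) := by
    funext y; exact fderiv_radial_apply hψd y e
  rw [h1]
  have hc : DifferentiableAt ℝ (fun y : EuclideanSpace ℝ (Fin n) => deriv ψ ⟪y, y⟫) x :=
    (hasFDerivAt_radial hψ'd x).differentiableAt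
  have hdQ : HasFDerivAt (fun y : EuclideanSpace ℝ (Fin n) => (2:ℝ) * ⟪y, e⟫)
      ((2:ℝ) • ((fderivInnerCLM ℝ (x, e)).comp
        ((ContinuousLinearMap.id ℝ _).prod (0 : _ →L[ℝ] _)))) x :=
    ((hasFDerivAt_id x).inner ℝ (hasFDerivAt_const e x)).const_mul 2
  rw [fderiv_fun_mul hc hdQ.differentiableAt]
  simp only [ContinuousLinearMap.add_apply, ContinuousLinearMap.smul_apply, smul_eq_mul]
  rw [hdQ.fderiv, (hasFDerivAt_radial hψ'd x).fderiv]
  simp only [ContinuousLinearMap.smul_apply, ContinuousLinearMap.coe_comp',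
    Function.comp_apply, ContinuousLinearMap.prod_apply, ContinuousLinearMap.coe_id', id_eq,
    ContinuousLinearMap.zero_apply, fderivInnerCLM_apply, smul_eq_mul, inner_zero_right,
    add_zero]
  rw [real_inner_comm e x]
  ring

lemma inner_single_one (x : EuclideanSpace ℝ (Fin n)) (i : Fin n) :
    ⟪x, EuclideanSpace.single i (1:ℝ)⟫ = x i := by
  rw [EuclideanSpace.inner_single_right]
  simp

lemma sum_sq_eq_norm_sq (x : EuclideanSpace ℝ (Fin n)) :
    ∑ i, x i * x i = ‖x‖ ^ 2 := by
  rw [← real_inner_self_eq_norm_sq]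
  rfl

lemma lapl_radial {ψ : ℝ → ℝ} (hψ : ContDiff ℝ (⊤ : ℕ∞) ψ) (x : EuclideanSpace ℝ (Fin n)) :
    lapl (fun y : EuclideanSpace ℝ (Fin n) => ψ ⟪y, y⟫) x
      = 4 * deriv (deriv ψ) ⟪x, x⟫ * ‖x‖ ^ 2 + 2 * n * deriv ψ ⟪x, x⟫ := by
  unfold lapl
  have : ∀ i : Fin n,
      fderiv ℝ (fun y => fderiv ℝ (fun z : EuclideanSpace ℝ (Fin n) => ψ ⟪z, z⟫) y
        (EuclideanSpace.single i 1)) x (EuclideanSpace.single i 1)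
      = 4 * deriv (deriv ψ) ⟪x, x⟫ * (x i * x i) + 2 * deriv ψ ⟪x, x⟫ := by
    intro i
    rw [d2_radial_apply hψ x (EuclideanSpace.single i 1)]
    rw [inner_single_one, inner_single_one]
    simp [EuclideanSpace.single_apply]
    ring
  rw [Finset.sum_congr rfl fun i _ => this i]
  rw [Finset.sum_add_distrib, ← Finset.mul_sum, Finset.sum_const, Finset.card_fin,
    sum_sq_eq_norm_sq]
  simp [nsmul_eq_mul]
  ring

lemma cross_sum_eq {w : EuclideanSpace ℝ (Fin n) → ℝ} {ψ : ℝ → ℝ}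
    (hψ : Differentiable ℝ ψ) (x : EuclideanSpace ℝ (Fin n)) :
    ∑ i, fderiv ℝ w x (EuclideanSpace.single i 1)
        * fderiv ℝ (fun y : EuclideanSpace ℝ (Fin n) => ψ ⟪y, y⟫) x (EuclideanSpace.single i 1)
      = fderiv ℝ w x ((2 * deriv ψ ⟪x, x⟫) • x) := by
  rw [clm_apply_eq_sum]
  refine Finset.sum_congr rfl fun i _ => ?_
  rw [fderiv_radial_apply hψ x (EuclideanSpace.single i 1), inner_single_one]
  have : ((2 * deriv ψ ⟪x, x⟫) • x) i = (2 * deriv ψ ⟪x, x⟫) * x i := rfl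
  rw [this]
  ring

noncomputable def phi : ℝ → ℝ := fun t => Real.smoothTransition (3 - t)

lemma phi_contDiff : ContDiff ℝ (⊤ : ℕ∞) phi :=
  Real.smoothTransition.contDiff.comp (contDiff_const.sub contDiff_id)

lemma phi_one {t : ℝ} (ht : t ≤ 2) : phi t = 1 :=
  Real.smoothTransition.one_of_one_le (by linarith)

lemma phi_zero {t : ℝ} (ht : 3 ≤ t) : phi t = 0 :=
  Real.smoothTransition.zero_of_nonpos (by linarith)

lemma phi_nonneg (t : ℝ) : 0 ≤ phi t := Real.smoothTransition.nonneg _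

lemma phi_le_one (t : ℝ) : phi t ≤ 1 := Real.smoothTransition.le_one _

lemma deriv_phi_zero {t : ℝ} (ht : t < 2 ∨ 3 < t) : deriv phi t = 0 := by
  rcases ht with ht | ht
  · have hev : phi =ᶠ[nhds t] fun _ => 1 :=
      Filter.eventuallyEq_of_mem (Iio_mem_nhds ht) fun s hs => phi_one (le_of_lt hs)
    rw [hev.deriv_eq, deriv_const]
  · have hev : phi =ᶠ[nhds t] fun _ => 0 :=
      Filter.eventuallyEq_of_mem (Ioi_mem_nhds ht) fun s hs => phi_zero (le_of_lt hs)
    rw [hev.deriv_eq, deriv_const]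

lemma deriv2_phi_zero {t : ℝ} (ht : t < 2 ∨ 3 < t) : deriv (deriv phi) t = 0 := by
  rcases ht with ht | ht
  · have hev : deriv phi =ᶠ[nhds t] fun _ => 0 :=
      Filter.eventuallyEq_of_mem (Iio_mem_nhds ht) fun s hs => deriv_phi_zero (Or.inl hs)
    rw [hev.deriv_eq, deriv_const]
  · have hev : deriv phi =ᶠ[nhds t] fun _ => 0 :=
      Filter.eventuallyEq_of_mem (Ioi_mem_nhds ht) fun s hs => deriv_phi_zero (Or.inr hs)
    rw [hev.deriv_eq, deriv_const]

lemma phi_deriv_contDiff : ContDiff ℝ (⊤ : ℕ∞) (deriv phi) :=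
  (contDiff_infty_iff_deriv.mp phi_contDiff).2

lemma phi_deriv2_contDiff : ContDiff ℝ (⊤ : ℕ∞) (deriv (deriv phi)) :=
  (contDiff_infty_iff_deriv.mp phi_deriv_contDiff).2

lemma bound_of_vanish {f : ℝ → ℝ} (hf : Continuous f)
    (h0 : ∀ t, t < 2 ∨ 3 < t → f t = 0) : ∃ M : ℝ, 0 ≤ M ∧ ∀ t, |f t| ≤ M := by
  have hsupp : HasCompactSupport f := by
    refine HasCompactSupport.intro (isCompact_Icc (a := (2:ℝ)) (b := 3)) fun t ht => ?_
    refine h0 t ?_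
    rcases lt_or_ge t 2 with hl | hl
    · exact Or.inl hl
    · right
      by_contra hc
      exact ht ⟨hl, not_lt.mp hc⟩
  obtain ⟨C, hC⟩ := hsupp.exists_bound_of_continuous hf
  exact ⟨C, le_trans (abs_nonneg _) (by simpa using hC 0), fun t => by simpa using hC t⟩

lemma deriv_comp_mul_const {f : ℝ → ℝ} (hf : Differentiable ℝ f) (c : ℝ) :
    deriv (fun t => f (t * c)) = fun t => deriv f (t * c) * c := by
  funext t
  exact (HasDerivAt.comp t (hf (t * c)).hasDerivAt (hasDerivAt_mul_const c)).deriv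

lemma sup_ball_lintegral {S : Set (EuclideanSpace ℝ (Fin n))} (hS : MeasurableSet S)
    {g : EuclideanSpace ℝ (Fin n) → ℝ≥0∞} (hg : Measurable g) :
    (⨆ j : ℕ, ∫⁻ x in S ∩ Metric.ball 0 j, g x) = ∫⁻ x in S, g x := by
  have hmeas : ∀ j : ℕ, MeasurableSet (S ∩ Metric.ball (0 : EuclideanSpace ℝ (Fin n)) j) :=
    fun j => hS.inter measurableSet_ball
  have h1 : ∀ j : ℕ, ∫⁻ x in S ∩ Metric.ball 0 j, g x
      = ∫⁻ x, (S ∩ Metric.ball 0 j).indicator g x := fun j =>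
    (lintegral_indicator (hmeas j) g).symm
  have hmono : Monotone fun j : ℕ =>
      (S ∩ Metric.ball (0 : EuclideanSpace ℝ (Fin n)) j).indicator g := by
    intro a b hab
    refine Set.indicator_le_indicator_of_subset
      (Set.inter_subset_inter_right _ (Metric.ball_subset_ball (by exact_mod_cast hab)))
      (fun x => zero_le)
  calc (⨆ j : ℕ, ∫⁻ x in S ∩ Metric.ball 0 j, g x)
      = ⨆ j : ℕ, ∫⁻ x, (S ∩ Metric.ball 0 j).indicator g x := by simp_rw [h1]
    _ = ∫⁻ x, ⨆ j : ℕ, (S ∩ Metric.ball 0 j).indicator g x :=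
        (lintegral_iSup (fun j => hg.indicator (hmeas j)) hmono).symm
    _ = ∫⁻ x in S, g x := by
        rw [← lintegral_indicator hS]
        congr 1
        funext x
        by_cases hx : x ∈ S
        · obtain ⟨j, hj⟩ := exists_nat_gt ‖x‖
          apply le_antisymm
          · exact iSup_le fun j => Set.indicator_le_indicator_of_subset
              Set.inter_subset_left (fun x => zero_le) x
          · refine le_iSup_of_le j ?_
            have hxj : x ∈ S ∩ Metric.ball (0 : EuclideanSpace ℝ (Fin n)) j :=
              Set.mem_inter hx (by simpa [Metric.mem_ball] using hj)
            rw [Set.indicator_of_mem hx g, Set.indicator_of_mem hxj g]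
        · simp [Set.indicator_of_notMem, hx]

lemma aux_sq3 {lv p q r : ℝ} (h : lv = p + q + r) : lv^2 ≤ 3*p^2+3*q^2+3*r^2 := by
  subst h
  nlinarith [sq_nonneg (p-q), sq_nonneg (p-r), sq_nonneg (q-r)]

lemma abs_le_one_sq {p : ℝ} (h : |p| ≤ 1) : p^2 ≤ 1 := by
  nlinarith [abs_nonneg p, sq_abs p]

lemma mul_sq_le {p a : ℝ} (hp : p^2 ≤ 1) : (p*a)^2 ≤ a^2 := by
  nlinarith [sq_nonneg a]

end Aux
set_option maxHeartbeats 1000000 in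
open RealInnerProductSpace in
/-- Proposition 4.3 of the paper in the Euclidean case σ(r) = r: extension of the
Carleman estimate from compactly supported functions to functions with non-compact
support, at the price of a universal constant Λ = Λ(n). -/
theorem stmt_5 (n : ℕ) (hn : 2 ≤ n) :
    ∃ Λ : ℝ, 0 < Λ ∧ ∀ r0 : ℝ, 0 ≤ r0 →
    ∀ h k1 k2 : EuclideanSpace ℝ (Fin n) → ℝ,
    Measurable h → Measurable k1 → Measurable k2 →
    (∀ x : EuclideanSpace ℝ (Fin n), r0 < ‖x‖ → 0 < k1 x) →
    (∀ x : EuclideanSpace ℝ (Fin n), r0 < ‖x‖ → 0 < k2 x) →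
    (∀ v : EuclideanSpace ℝ (Fin n) → ℝ, ContDiff ℝ 2 v → HasCompactSupport v →
      tsupport v ⊆ {x : EuclideanSpace ℝ (Fin n) | r0 < ‖x‖} →
      (∫⁻ x in {x : EuclideanSpace ℝ (Fin n) | r0 < ‖x‖},
          ENNReal.ofReal (v x ^ 2 * k1 x * Real.exp (h x)))
        + (∫⁻ x in {x : EuclideanSpace ℝ (Fin n) | r0 < ‖x‖},
            ENNReal.ofReal (‖gradient v x‖ ^ 2 * k2 x * Real.exp (h x)))
        ≤ ∫⁻ x in {x : EuclideanSpace ℝ (Fin n) | r0 < ‖x‖},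
            ENNReal.ofReal ((lapl v x) ^ 2 * Real.exp (h x))) →
    ∀ w : EuclideanSpace ℝ (Fin n) → ℝ, ContDiff ℝ 2 w →
    (∃ δ > (0 : ℝ), ∀ x : EuclideanSpace ℝ (Fin n), ‖x‖ < r0 + δ → w x = 0) →
    (∫⁻ x in {x : EuclideanSpace ℝ (Fin n) | r0 < ‖x‖},
        ENNReal.ofReal (w x ^ 2 * (1 + k2 x) * Real.exp (h x)) < ⊤) →
    (∀ᶠ R in atTop,
      ∫⁻ x in {x : EuclideanSpace ℝ (Fin n) | R < ‖x‖ ∧ ‖x‖ < 2 * R},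
        ENNReal.ofReal (‖gradient w x‖ ^ 2 * Real.exp (h x)) < ⊤) →
    ((fun R => (∫⁻ x in {x : EuclideanSpace ℝ (Fin n) | R < ‖x‖ ∧ ‖x‖ < 2 * R},
        ENNReal.ofReal (‖gradient w x‖ ^ 2 * Real.exp (h x))).toReal)
      =o[atTop] fun R => R ^ 2) →
    (∫⁻ x in {x : EuclideanSpace ℝ (Fin n) | r0 < ‖x‖},
        ENNReal.ofReal (w x ^ 2 * k1 x * Real.exp (h x)))
      + (∫⁻ x in {x : EuclideanSpace ℝ (Fin n) | r0 < ‖x‖},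
          ENNReal.ofReal (‖gradient w x‖ ^ 2 * k2 x * Real.exp (h x)))
      ≤ ENNReal.ofReal Λ * ∫⁻ x in {x : EuclideanSpace ℝ (Fin n) | r0 < ‖x‖},
          ENNReal.ofReal ((lapl w x) ^ 2 * Real.exp (h x)) := by
  classical
  obtain ⟨M₁, hM₁0, hM₁⟩ := bound_of_vanish phi_deriv_contDiff.continuous
    (fun t ht => deriv_phi_zero ht)
  obtain ⟨M₂, hM₂0, hM₂⟩ := bound_of_vanish phi_deriv2_contDiff.continuous
    (fun t ht => deriv2_phi_zero ht)
  refine ⟨3, by norm_num, ?_⟩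
  intro r0 hr0 h k1 k2 mh mk1 mk2 hk1 hk2 carl w hw hvan hfin hGfin hGo
  obtain ⟨δ, hδ, hwz⟩ := hvan
  set S : Set (EuclideanSpace ℝ (Fin n)) := {x | r0 < ‖x‖} with hSdef
  have hS : MeasurableSet S := measurableSet_lt measurable_const measurable_norm
  have me : Measurable fun x : EuclideanSpace ℝ (Fin n) => Real.exp (h x) :=
    Real.measurable_exp.comp mh
  have cw : Continuous w := hw.continuous
  have cgw : Continuous fun x => gradient w x := continuous_gradient hw
  have claplw : Continuous (lapl w) := continuous_lapl hw
  have mgA : Measurable fun x : EuclideanSpace ℝ (Fin n) =>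
      ENNReal.ofReal (w x ^ 2 * k1 x * Real.exp (h x)) :=
    (((cw.measurable.pow_const 2).mul mk1).mul me).ennreal_ofReal
  have mgB : Measurable fun x : EuclideanSpace ℝ (Fin n) =>
      ENNReal.ofReal (‖gradient w x‖ ^ 2 * k2 x * Real.exp (h x)) :=
    (((cgw.norm.measurable.pow_const 2).mul mk2).mul me).ennreal_ofReal
  have mgC : Measurable fun x : EuclideanSpace ℝ (Fin n) =>
      ENNReal.ofReal ((lapl w x) ^ 2 * Real.exp (h x)) :=
    ((claplw.measurable.pow_const 2).mul me).ennreal_ofReal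
  have mgW : Measurable fun x : EuclideanSpace ℝ (Fin n) =>
      ENNReal.ofReal (w x ^ 2 * Real.exp (h x)) :=
    ((cw.measurable.pow_const 2).mul me).ennreal_ofReal
  have mgG : Measurable fun x : EuclideanSpace ℝ (Fin n) =>
      ENNReal.ofReal (‖gradient w x‖ ^ 2 * Real.exp (h x)) :=
    ((cgw.norm.measurable.pow_const 2).mul me).ennreal_ofReal
  set K : ℝ := 16 * M₂ + 2 * n * M₁ with hKdef
  have hK0 : 0 ≤ K := by positivity
  set c₁ : ℝ := 192 * M₁ ^ 2 with hc₁def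
  have hc₁0 : 0 ≤ c₁ := by positivity
  set c₂ : ℝ := 3 * K ^ 2 with hc₂def
  have hc₂0 : 0 ≤ c₂ := by positivity
  set Wint : ℝ≥0∞ := ∫⁻ x in S, ENNReal.ofReal (w x ^ 2 * Real.exp (h x)) with hWdef
  have hW' : Wint ≠ ⊤ := by
    refine ne_top_of_le_ne_top hfin.ne ?_
    refine setLIntegral_mono' hS fun x hx => ?_
    refine ENNReal.ofReal_le_ofReal ?_
    have h2 := (hk2 x hx).le
    have h3 := (Real.exp_pos (h x)).le
    nlinarith [mul_nonneg (mul_nonneg (sq_nonneg (w x)) h3) h2]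
  set GR : ℝ → ℝ≥0∞ := fun R =>
    ∫⁻ x in {x : EuclideanSpace ℝ (Fin n) | R < ‖x‖ ∧ ‖x‖ < 2 * R},
      ENNReal.ofReal (‖gradient w x‖ ^ 2 * Real.exp (h x)) with hGRdef
  have hGo' : (fun R => (GR R).toReal) =o[atTop] fun R : ℝ => R ^ 2 := hGo
  have hGfin' : ∀ᶠ R in atTop, GR R < ⊤ := hGfin
  set Cint : ℝ≥0∞ := ∫⁻ x in S, ENNReal.ofReal ((lapl w x) ^ 2 * Real.exp (h x)) with hCdef
  have hAB : (∫⁻ x in S, ENNReal.ofReal (w x ^ 2 * k1 x * Real.exp (h x)))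
      + (∫⁻ x in S, ENNReal.ofReal (‖gradient w x‖ ^ 2 * k2 x * Real.exp (h x)))
      = ⨆ j : ℕ, ((∫⁻ x in S ∩ Metric.ball 0 j,
            ENNReal.ofReal (w x ^ 2 * k1 x * Real.exp (h x)))
          + (∫⁻ x in S ∩ Metric.ball 0 j,
            ENNReal.ofReal (‖gradient w x‖ ^ 2 * k2 x * Real.exp (h x)))) := by
    rw [← sup_ball_lintegral hS mgA, ← sup_ball_lintegral hS mgB]
    refine ENNReal.iSup_add_iSup_of_monotone ?_ ?_ <;>
      exact fun a b hab => lintegral_mono_set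
        (Set.inter_subset_inter_right _ (Metric.ball_subset_ball (by exact_mod_cast hab)))
  rw [hAB]
  clear_value Wint GR Cint
  refine iSup_le fun j => ?_
  -- limit of the error terms
  have hεto : Tendsto (fun R : ℝ => ENNReal.ofReal 3 * Cint
      + (ENNReal.ofReal (c₁ / R ^ 2) * GR R + ENNReal.ofReal (c₂ / R ^ 4) * Wint))
      atTop (𝓝 (ENNReal.ofReal 3 * Cint)) := by
    have t2 : Tendsto (fun R : ℝ => ENNReal.ofReal (c₂ / R ^ 4) * Wint) atTop (𝓝 0) := by
      have hreal : Tendsto (fun R : ℝ => c₂ / R ^ 4) atTop (𝓝 0) :=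
        tendsto_const_nhds.div_atTop (tendsto_pow_atTop (by norm_num))
      have h1 := ENNReal.tendsto_ofReal hreal
      rw [ENNReal.ofReal_zero] at h1
      simpa using ENNReal.Tendsto.mul_const h1 (Or.inr hW')
    have t1 : Tendsto (fun R : ℝ => ENNReal.ofReal (c₁ / R ^ 2) * GR R) atTop (𝓝 0) := by
      have hdiv : Tendsto (fun R => (GR R).toReal / R ^ 2) atTop (𝓝 0) :=
        hGo'.tendsto_div_nhds_zero
      have h2 : Tendsto (fun R => ENNReal.ofReal (c₁ * ((GR R).toReal / R ^ 2)))
          atTop (𝓝 0) := by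
        have h3 := ENNReal.tendsto_ofReal (hdiv.const_mul c₁)
        simpa using h3
      refine Tendsto.congr' ?_ h2
      filter_upwards [hGfin', eventually_ge_atTop (1:ℝ)] with R hfinR hR1
      have hR0 : (0:ℝ) < R := lt_of_lt_of_le one_pos hR1
      rw [show c₁ * ((GR R).toReal / R ^ 2) = (c₁ / R ^ 2) * (GR R).toReal by ring]
      rw [ENNReal.ofReal_mul (by positivity)]
      rw [ENNReal.ofReal_toReal hfinR.ne]
    have hsum := t1.add t2
    have := Tendsto.const_add (ENNReal.ofReal 3 * Cint) hsum
    simpa using this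
  refine ge_of_tendsto hεto ?_
  filter_upwards [eventually_ge_atTop (1 : ℝ), eventually_ge_atTop ((j : ℝ))]
    with R hR1 hRj
  have hR0 : (0:ℝ) < R := lt_of_lt_of_le one_pos hR1
  -- cutoff construction
  set c : ℝ := (R ^ 2)⁻¹ with hcdef
  have hc0 : 0 < c := by positivity
  set ψ : ℝ → ℝ := fun t => phi (t * c) with hψdef
  have hψc : ContDiff ℝ (⊤ : ℕ∞) ψ := phi_contDiff.comp (contDiff_id.mul contDiff_const)
  have hψd : Differentiable ℝ ψ := hψc.differentiable (by simp)
  have hdψ : deriv ψ = fun t => deriv phi (t * c) * c :=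
    deriv_comp_mul_const (phi_contDiff.differentiable (by simp)) c
  have hdψ2 : deriv (deriv ψ) = fun t => deriv (deriv phi) (t * c) * c * c := by
    rw [hdψ]
    funext t
    have hg : Differentiable ℝ (fun t : ℝ => deriv phi (t * c)) :=
      (phi_deriv_contDiff.differentiable (by simp)).comp (differentiable_id.mul_const c)
    rw [deriv_mul_const (hg t),
      deriv_comp_mul_const (phi_deriv_contDiff.differentiable (by simp)) c]
  have hψ'bound : ∀ t, |deriv ψ t| ≤ M₁ / R ^ 2 := by
    intro t
    have hval : deriv ψ t = deriv phi (t * c) * c := by rw [hdψ]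
    rw [hval, abs_mul, abs_of_pos hc0, hcdef, div_eq_mul_inv]
    exact mul_le_mul_of_nonneg_right (hM₁ _) (by positivity)
  have hψ''bound : ∀ t, |deriv (deriv ψ) t| ≤ M₂ / R ^ 4 := by
    intro t
    have hval : deriv (deriv ψ) t = deriv (deriv phi) (t * c) * c * c := by rw [hdψ2]
    rw [hval, abs_mul, abs_mul, abs_of_pos hc0]
    have : M₂ / R ^ 4 = M₂ * c * c := by
      rw [hcdef]
      have h4 : (R:ℝ)^2 * R^2 = R^4 := by ring
      rw [div_eq_mul_inv, ← h4, mul_inv, ← mul_assoc]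
    rw [this]
    exact mul_le_mul_of_nonneg_right
      (mul_le_mul_of_nonneg_right (hM₂ _) hc0.le) hc0.le
  have hc2 : 2 * R ^ 2 * c = 2 := by rw [hcdef]; field_simp
  have hc3 : 3 * R ^ 2 * c = 3 := by rw [hcdef]; field_simp
  have hψ'zero : ∀ t, t < 2 * R ^ 2 ∨ 3 * R ^ 2 < t → deriv ψ t = 0 := by
    intro t ht
    have hval : deriv ψ t = deriv phi (t * c) * c := by rw [hdψ]
    rw [hval]
    have hcase : t * c < 2 ∨ 3 < t * c := by
      rcases ht with ht | ht
      · exact Or.inl (by calc t * c < 2 * R ^ 2 * c := by exact mul_lt_mul_of_pos_right ht hc0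
          _ = 2 := hc2)
      · exact Or.inr (by calc (3:ℝ) = 3 * R ^ 2 * c := hc3.symm
          _ < t * c := by exact mul_lt_mul_of_pos_right ht hc0)
    simp [deriv_phi_zero hcase]
  have hψ''zero : ∀ t, t < 2 * R ^ 2 ∨ 3 * R ^ 2 < t → deriv (deriv ψ) t = 0 := by
    intro t ht
    have hval : deriv (deriv ψ) t = deriv (deriv phi) (t * c) * c * c := by rw [hdψ2]
    rw [hval]
    have hcase : t * c < 2 ∨ 3 < t * c := by
      rcases ht with ht | ht
      · exact Or.inl (by calc t * c < 2 * R ^ 2 * c := by exact mul_lt_mul_of_pos_right ht hc0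
          _ = 2 := hc2)
      · exact Or.inr (by calc (3:ℝ) = 3 * R ^ 2 * c := hc3.symm
          _ < t * c := by exact mul_lt_mul_of_pos_right ht hc0)
    simp [deriv2_phi_zero hcase]
  have hψone : ∀ t, t ≤ 2 * R ^ 2 → ψ t = 1 := by
    intro t ht
    refine phi_one ?_
    calc t * c ≤ 2 * R ^ 2 * c := mul_le_mul_of_nonneg_right ht hc0.le
      _ = 2 := hc2
  have hψzero : ∀ t, 3 * R ^ 2 ≤ t → ψ t = 0 := by
    intro t ht
    refine phi_zero ?_
    calc (3:ℝ) = 3 * R ^ 2 * c := hc3.symm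
      _ ≤ t * c := mul_le_mul_of_nonneg_right ht hc0.le
  have hψ01 : ∀ t, |ψ t| ≤ 1 := fun t =>
    abs_le.mpr ⟨by linarith [phi_nonneg (t * c)], phi_le_one (t * c)⟩
  set χ : EuclideanSpace ℝ (Fin n) → ℝ := fun y => ψ ⟪y, y⟫ with hχdef
  have hχtop : ContDiff ℝ (⊤ : ℕ∞) χ := hψc.comp (contDiff_id.inner ℝ contDiff_id)
  have hχ2 : ContDiff ℝ 2 χ := hχtop.of_le (by norm_cast)
  set v : EuclideanSpace ℝ (Fin n) → ℝ := fun y => w y * χ y with hvdef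
  have hv2 : ContDiff ℝ 2 v := hw.mul hχ2
  have hQn : ∀ y : EuclideanSpace ℝ (Fin n), ⟪y, y⟫ = ‖y‖ ^ 2 := fun y =>
    real_inner_self_eq_norm_sq y
  have hχone : ∀ y, ‖y‖ ^ 2 ≤ 2 * R ^ 2 → χ y = 1 := by
    intro y hy
    show ψ ⟪y, y⟫ = 1
    rw [hQn y]
    exact hψone _ hy
  have hχzero : ∀ y, 3 * R ^ 2 ≤ ‖y‖ ^ 2 → χ y = 0 := by
    intro y hy
    show ψ ⟪y, y⟫ = 0
    rw [hQn y]
    exact hψzero _ hy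
  have hχabs : ∀ y, |χ y| ≤ 1 := fun y => hψ01 _
  have hvcs : HasCompactSupport v := by
    refine HasCompactSupport.intro
      (isCompact_closedBall (0 : EuclideanSpace ℝ (Fin n)) (2 * R)) fun y hy => ?_
    have hy' : 2 * R < ‖y‖ := by
      simp only [Metric.mem_closedBall, dist_zero_right, not_le] at hy
      exact hy
    have hz : χ y = 0 := hχzero y (by nlinarith [norm_nonneg y])
    show w y * χ y = 0
    rw [hz, mul_zero]
  have hvsupp : tsupport v ⊆ S := by
    have h1 : Function.support v ⊆ {y : EuclideanSpace ℝ (Fin n) | r0 + δ ≤ ‖y‖} := by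
      intro y hy
      by_contra hcon
      simp only [Set.mem_setOf_eq, not_le] at hcon
      refine hy ?_
      show w y * χ y = 0
      rw [hwz y hcon, zero_mul]
    have h2 : IsClosed {y : EuclideanSpace ℝ (Fin n) | r0 + δ ≤ ‖y‖} :=
      isClosed_le continuous_const continuous_norm
    refine (closure_minimal h1 h2).trans fun y hy => ?_
    have hy' : r0 + δ ≤ ‖y‖ := hy
    show r0 < ‖y‖
    linarith
  have hveq : ∀ y : EuclideanSpace ℝ (Fin n), ‖y‖ < R → v y = w y := by
    intro y hy
    have h1 : χ y = 1 := hχone y (by nlinarith [norm_nonneg y])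
    show w y * χ y = w y
    rw [h1, mul_one]
  have hgradeq : ∀ y : EuclideanSpace ℝ (Fin n), ‖y‖ < R → gradient v y = gradient w y := by
    intro y hy
    apply gradient_congr_nhds
    have hball : Metric.ball (0 : EuclideanSpace ℝ (Fin n)) R ∈ 𝓝 y :=
      Metric.isOpen_ball.mem_nhds (mem_ball_zero_iff.mpr hy)
    exact Filter.eventuallyEq_of_mem hball fun z hz => hveq z (mem_ball_zero_iff.mp hz)
  have hcar := carl v hv2 hvcs hvsupp
  clear_value c ψ χ v
  have hAj : (∫⁻ x in S ∩ Metric.ball 0 j, ENNReal.ofReal (w x ^ 2 * k1 x * Real.exp (h x)))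
      ≤ ∫⁻ x in S, ENNReal.ofReal (v x ^ 2 * k1 x * Real.exp (h x)) := by
    have heq : (∫⁻ x in S ∩ Metric.ball 0 j,
          ENNReal.ofReal (w x ^ 2 * k1 x * Real.exp (h x)))
        = ∫⁻ x in S ∩ Metric.ball 0 j,
            ENNReal.ofReal (v x ^ 2 * k1 x * Real.exp (h x)) := by
      refine setLIntegral_congr_fun (hS.inter measurableSet_ball) (fun x hx => ?_)
      rw [hveq x (lt_of_lt_of_le (mem_ball_zero_iff.mp hx.2) hRj)]
    rw [heq]
    exact lintegral_mono_set Set.inter_subset_left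
  have hBj : (∫⁻ x in S ∩ Metric.ball 0 j,
        ENNReal.ofReal (‖gradient w x‖ ^ 2 * k2 x * Real.exp (h x)))
      ≤ ∫⁻ x in S, ENNReal.ofReal (‖gradient v x‖ ^ 2 * k2 x * Real.exp (h x)) := by
    have heq : (∫⁻ x in S ∩ Metric.ball 0 j,
          ENNReal.ofReal (‖gradient w x‖ ^ 2 * k2 x * Real.exp (h x)))
        = ∫⁻ x in S ∩ Metric.ball 0 j,
            ENNReal.ofReal (‖gradient v x‖ ^ 2 * k2 x * Real.exp (h x)) := by
      refine setLIntegral_congr_fun (hS.inter measurableSet_ball) (fun x hx => ?_)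
      rw [hgradeq x (lt_of_lt_of_le (mem_ball_zero_iff.mp hx.2) hRj)]
    rw [heq]
    exact lintegral_mono_set Set.inter_subset_left
  set Ann : Set (EuclideanSpace ℝ (Fin n)) := {x | R < ‖x‖ ∧ ‖x‖ < 2 * R} with hAnndef
  have hAnnMeas : MeasurableSet Ann :=
    (measurableSet_lt measurable_const measurable_norm).inter
      (measurableSet_lt measurable_norm measurable_const)
  have key : ∀ x : EuclideanSpace ℝ (Fin n),
      ENNReal.ofReal ((lapl v x) ^ 2 * Real.exp (h x))
        ≤ ENNReal.ofReal (3 * ((lapl w x) ^ 2 * Real.exp (h x)))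
          + Ann.indicator (fun x => ENNReal.ofReal
              ((c₁ / R ^ 2) * (‖gradient w x‖ ^ 2 * Real.exp (h x)))) x
          + ENNReal.ofReal ((c₂ / R ^ 4) * (w x ^ 2 * Real.exp (h x))) := by
    intro x
    have hexp := (Real.exp_pos (h x)).le
    have hlapv : lapl v x = χ x * lapl w x
        + (4 * deriv (deriv ψ) ⟪x, x⟫ * ‖x‖ ^ 2 + 2 * (n:ℝ) * deriv ψ ⟪x, x⟫) * w x
        + 2 * fderiv ℝ w x ((2 * deriv ψ ⟪x, x⟫) • x) := by
      have h2 : lapl χ x = 4 * deriv (deriv ψ) ⟪x, x⟫ * ‖x‖ ^ 2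
          + 2 * (n:ℝ) * deriv ψ ⟪x, x⟫ := by
        rw [hχdef]; exact lapl_radial hψc x
      have h3 : (∑ i, fderiv ℝ w x (EuclideanSpace.single i 1)
            * fderiv ℝ χ x (EuclideanSpace.single i 1))
          = fderiv ℝ w x ((2 * deriv ψ ⟪x, x⟫) • x) := by
        rw [hχdef]; exact cross_sum_eq hψd x
      calc lapl v x = lapl (fun y => w y * χ y) x := by rw [hvdef]
        _ = w x * lapl χ x + χ x * lapl w x + 2 * ∑ i,
              fderiv ℝ w x (EuclideanSpace.single i 1)
                * fderiv ℝ χ x (EuclideanSpace.single i 1) := lapl_mul hw hχ2 x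
        _ = _ := by rw [h2, h3]; ring
    set a := lapl w x with hadef
    set T := fderiv ℝ w x ((2 * deriv ψ ⟪x, x⟫) • x) with hTdef
    set L := 4 * deriv (deriv ψ) ⟪x, x⟫ * ‖x‖ ^ 2 + 2 * (n:ℝ) * deriv ψ ⟪x, x⟫ with hLdef
    clear_value a T L
    have hχsq : (χ x) ^ 2 ≤ 1 := abs_le_one_sq (hχabs x)
    by_cases hP : 2 * R ^ 2 ≤ ‖x‖ ^ 2 ∧ ‖x‖ ^ 2 ≤ 3 * R ^ 2
    · have hxAnn : x ∈ Ann := by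
        have ha1 : R < ‖x‖ := by
          by_contra hcon
          push_neg at hcon
          nlinarith [hP.1, norm_nonneg x]
        have ha2 : ‖x‖ < 2 * R := by
          by_contra hcon
          push_neg at hcon
          nlinarith [hP.2, norm_nonneg x]
        exact ⟨ha1, ha2⟩
      have hT : |T| ≤ ‖gradient w x‖ * (4 * M₁ / R) := by
        rw [hTdef]
        refine (abs_fderiv_le w x _).trans ?_
        rw [norm_smul, Real.norm_eq_abs]
        have h4 : |2 * deriv ψ ⟪x, x⟫| ≤ 2 * (M₁ / R ^ 2) := by
          rw [abs_mul, abs_two]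
          exact mul_le_mul_of_nonneg_left (hψ'bound _) (by norm_num)
        have h5 : ‖x‖ ≤ 2 * R := le_of_lt hxAnn.2
        calc ‖gradient w x‖ * (|2 * deriv ψ ⟪x, x⟫| * ‖x‖)
            ≤ ‖gradient w x‖ * ((2 * (M₁ / R ^ 2)) * (2 * R)) := by
              refine mul_le_mul_of_nonneg_left ?_ (norm_nonneg _)
              exact mul_le_mul h4 h5 (norm_nonneg x) (by positivity)
          _ = ‖gradient w x‖ * (4 * M₁ / R) := by
              field_simp
              ring
      have hL : |L| ≤ K / R ^ 2 := by
        rw [hLdef]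
        have e1 : |4 * deriv (deriv ψ) ⟪x, x⟫ * ‖x‖ ^ 2|
            ≤ 4 * (M₂ / R ^ 4) * (3 * R ^ 2) := by
          rw [abs_mul, abs_mul]
          have b1 := hψ''bound ⟪x, x⟫
          have b2 : |‖x‖ ^ 2| = ‖x‖ ^ 2 := abs_of_nonneg (by positivity)
          rw [b2, abs_of_nonneg (by norm_num : (0:ℝ) ≤ 4)]
          have hb : 0 ≤ |deriv (deriv ψ) ⟪x, x⟫| := abs_nonneg _
          nlinarith [hP.2, sq_nonneg ‖x‖, hM₂0, b1]
        have e2 : |2 * (n:ℝ) * deriv ψ ⟪x, x⟫| ≤ 2 * (n:ℝ) * (M₁ / R ^ 2) := by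
          rw [abs_mul]
          have : |2 * (n:ℝ)| = 2 * (n:ℝ) := abs_of_nonneg (by positivity)
          rw [this]
          exact mul_le_mul_of_nonneg_left (hψ'bound _) (by positivity)
        have e3 : 4 * (M₂ / R ^ 4) * (3 * R ^ 2) + 2 * (n:ℝ) * (M₁ / R ^ 2) ≤ K / R ^ 2 := by
          rw [hKdef]
          have h12 : 4 * (M₂ / R ^ 4) * (3 * R ^ 2) = 12 * M₂ / R ^ 2 := by
            field_simp
            ring
          have h13 : 2 * (n:ℝ) * (M₁ / R ^ 2) = 2 * (n:ℝ) * M₁ / R ^ 2 := by ring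
          rw [h12, h13, ← add_div]
          gcongr
          nlinarith [hM₂0]
        calc |4 * deriv (deriv ψ) ⟪x, x⟫ * ‖x‖ ^ 2 + 2 * (n:ℝ) * deriv ψ ⟪x, x⟫|
            ≤ |4 * deriv (deriv ψ) ⟪x, x⟫ * ‖x‖ ^ 2| + |2 * (n:ℝ) * deriv ψ ⟪x, x⟫| :=
              abs_add_le _ _
          _ ≤ 4 * (M₂ / R ^ 4) * (3 * R ^ 2) + 2 * (n:ℝ) * (M₁ / R ^ 2) :=
              add_le_add e1 e2
          _ ≤ K / R ^ 2 := e3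
      have hreal : (lapl v x) ^ 2 * Real.exp (h x) ≤
          3 * (a ^ 2 * Real.exp (h x))
          + (c₁ / R ^ 2) * (‖gradient w x‖ ^ 2 * Real.exp (h x))
          + (c₂ / R ^ 4) * (w x ^ 2 * Real.exp (h x)) := by
        have hsq : (lapl v x) ^ 2 ≤ 3 * (χ x * a) ^ 2 + 3 * (L * w x) ^ 2 + 3 * (2 * T) ^ 2 :=
          aux_sq3 hlapv
        have hχa : (χ x * a) ^ 2 ≤ a ^ 2 := mul_sq_le hχsq
        have hT2 : T ^ 2 ≤ (‖gradient w x‖ * (4 * M₁ / R)) ^ 2 := by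
          rw [← sq_abs T]
          exact pow_le_pow_left₀ (abs_nonneg T) hT 2
        have hB2 : 3 * (2 * T) ^ 2 ≤ (c₁ / R ^ 2) * ‖gradient w x‖ ^ 2 := by
          calc 3 * (2 * T) ^ 2 = 12 * T ^ 2 := by ring
            _ ≤ 12 * (‖gradient w x‖ * (4 * M₁ / R)) ^ 2 := by linarith
            _ = (c₁ / R ^ 2) * ‖gradient w x‖ ^ 2 := by
                rw [hc₁def]
                field_simp
                ring
        have hL2 : L ^ 2 ≤ (K / R ^ 2) ^ 2 := by
          rw [← sq_abs L]
          exact pow_le_pow_left₀ (abs_nonneg L) hL 2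
        have hC2 : 3 * (L * w x) ^ 2 ≤ (c₂ / R ^ 4) * w x ^ 2 := by
          calc 3 * (L * w x) ^ 2 = 3 * (L ^ 2 * w x ^ 2) := by ring
            _ ≤ 3 * ((K / R ^ 2) ^ 2 * w x ^ 2) := by
                have hstep := mul_le_mul_of_nonneg_right hL2 (sq_nonneg (w x))
                linarith
            _ = (c₂ / R ^ 4) * w x ^ 2 := by
                rw [hc₂def]
                field_simp
        have hfinal : (lapl v x) ^ 2 ≤ 3 * a ^ 2 + (c₁ / R ^ 2) * ‖gradient w x‖ ^ 2
            + (c₂ / R ^ 4) * w x ^ 2 := by linarith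
        calc (lapl v x) ^ 2 * Real.exp (h x)
            ≤ (3 * a ^ 2 + (c₁ / R ^ 2) * ‖gradient w x‖ ^ 2
                + (c₂ / R ^ 4) * w x ^ 2) * Real.exp (h x) :=
              mul_le_mul_of_nonneg_right hfinal hexp
          _ = 3 * (a ^ 2 * Real.exp (h x))
              + (c₁ / R ^ 2) * (‖gradient w x‖ ^ 2 * Real.exp (h x))
              + (c₂ / R ^ 4) * (w x ^ 2 * Real.exp (h x)) := by ring
      rw [Set.indicator_of_mem hxAnn, add_assoc]
      calc ENNReal.ofReal ((lapl v x) ^ 2 * Real.exp (h x))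
          ≤ ENNReal.ofReal (3 * (a ^ 2 * Real.exp (h x))
              + ((c₁ / R ^ 2) * (‖gradient w x‖ ^ 2 * Real.exp (h x))
                + (c₂ / R ^ 4) * (w x ^ 2 * Real.exp (h x)))) :=
            ENNReal.ofReal_le_ofReal (by linarith)
        _ ≤ ENNReal.ofReal (3 * (a ^ 2 * Real.exp (h x)))
            + ENNReal.ofReal ((c₁ / R ^ 2) * (‖gradient w x‖ ^ 2 * Real.exp (h x))
                + (c₂ / R ^ 4) * (w x ^ 2 * Real.exp (h x))) := ENNReal.ofReal_add_le
        _ ≤ ENNReal.ofReal (3 * (a ^ 2 * Real.exp (h x)))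
            + (ENNReal.ofReal ((c₁ / R ^ 2) * (‖gradient w x‖ ^ 2 * Real.exp (h x)))
                + ENNReal.ofReal ((c₂ / R ^ 4) * (w x ^ 2 * Real.exp (h x)))) :=
            add_le_add_right ENNReal.ofReal_add_le _
    · push_neg at hP
      have hcase : ⟪x, x⟫ < 2 * R ^ 2 ∨ 3 * R ^ 2 < ⟪x, x⟫ := by
        rw [hQn x]
        rcases lt_or_ge (‖x‖ ^ 2) (2 * R ^ 2) with hlt | hge
        · exact Or.inl hlt
        · exact Or.inr (hP hge)
      have hz1 : deriv ψ ⟪x, x⟫ = 0 := hψ'zero _ hcase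
      have hz2 : deriv (deriv ψ) ⟪x, x⟫ = 0 := hψ''zero _ hcase
      have hT0 : T = 0 := by
        rw [hTdef, hz1]
        have hzz : (2 * (0:ℝ)) • x = (0 : EuclideanSpace ℝ (Fin n)) := by norm_num
        rw [hzz, map_zero]
      have hL0 : L = 0 := by rw [hLdef, hz1, hz2]; ring
      have hlv : lapl v x = χ x * a := by rw [hlapv, hT0, hL0]; ring
      calc ENNReal.ofReal ((lapl v x) ^ 2 * Real.exp (h x))
          ≤ ENNReal.ofReal (3 * (a ^ 2 * Real.exp (h x))) := by
            refine ENNReal.ofReal_le_ofReal ?_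
            rw [hlv]
            calc (χ x * a) ^ 2 * Real.exp (h x)
                ≤ a ^ 2 * Real.exp (h x) :=
                  mul_le_mul_of_nonneg_right (mul_sq_le hχsq) hexp
              _ ≤ 3 * (a ^ 2 * Real.exp (h x)) := by
                  linarith only [mul_nonneg (sq_nonneg a) hexp]
        _ ≤ _ := le_self_add.trans le_self_add
  have hupper : (∫⁻ x in S, ENNReal.ofReal ((lapl v x) ^ 2 * Real.exp (h x)))
      ≤ ENNReal.ofReal 3 * Cint
        + (ENNReal.ofReal (c₁ / R ^ 2) * GR R + ENNReal.ofReal (c₂ / R ^ 4) * Wint) := by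
    refine le_trans (lintegral_mono key) ?_
    have m1 : Measurable fun x : EuclideanSpace ℝ (Fin n) =>
        ENNReal.ofReal (3 * ((lapl w x) ^ 2 * Real.exp (h x))) :=
      (measurable_const.mul ((claplw.measurable.pow_const 2).mul me)).ennreal_ofReal
    have m2 : Measurable (Ann.indicator fun x : EuclideanSpace ℝ (Fin n) =>
        ENNReal.ofReal ((c₁ / R ^ 2) * (‖gradient w x‖ ^ 2 * Real.exp (h x)))) :=
      ((measurable_const.mul ((cgw.norm.measurable.pow_const 2).mul me)).ennreal_ofReal).indicator
        hAnnMeas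
    rw [lintegral_add_left (m1.fun_add m2), lintegral_add_left m1]
    have p1 : (∫⁻ x in S, ENNReal.ofReal (3 * ((lapl w x) ^ 2 * Real.exp (h x))))
        = ENNReal.ofReal 3 * Cint := by
      rw [hCdef, ← lintegral_const_mul _ mgC]
      congr 1
      funext x
      rw [← ENNReal.ofReal_mul (by norm_num : (0:ℝ) ≤ 3)]
    have p2 : (∫⁻ x in S, Ann.indicator (fun x : EuclideanSpace ℝ (Fin n) =>
          ENNReal.ofReal ((c₁ / R ^ 2) * (‖gradient w x‖ ^ 2 * Real.exp (h x)))) x)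
        ≤ ENNReal.ofReal (c₁ / R ^ 2) * GR R := by
      rw [lintegral_indicator hAnnMeas, Measure.restrict_restrict hAnnMeas]
      refine le_trans (lintegral_mono_set Set.inter_subset_left) ?_
      have hGRR : GR R = ∫⁻ x in Ann,
          ENNReal.ofReal (‖gradient w x‖ ^ 2 * Real.exp (h x)) := by
        simp only [hGRdef, hAnndef]
      rw [hGRR]
      have hofr : ∀ x : EuclideanSpace ℝ (Fin n),
          ENNReal.ofReal ((c₁ / R ^ 2) * (‖gradient w x‖ ^ 2 * Real.exp (h x)))
          = ENNReal.ofReal (c₁ / R ^ 2)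
            * ENNReal.ofReal (‖gradient w x‖ ^ 2 * Real.exp (h x)) := fun x =>
        ENNReal.ofReal_mul (div_nonneg hc₁0 (by positivity))
      simp_rw [hofr]
      rw [lintegral_const_mul _ mgG]
    have p3 : (∫⁻ x in S, ENNReal.ofReal ((c₂ / R ^ 4) * (w x ^ 2 * Real.exp (h x))))
        = ENNReal.ofReal (c₂ / R ^ 4) * Wint := by
      rw [hWdef]
      have hofr : ∀ x : EuclideanSpace ℝ (Fin n),
          ENNReal.ofReal ((c₂ / R ^ 4) * (w x ^ 2 * Real.exp (h x)))
          = ENNReal.ofReal (c₂ / R ^ 4)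
            * ENNReal.ofReal (w x ^ 2 * Real.exp (h x)) := fun x =>
        ENNReal.ofReal_mul (div_nonneg hc₂0 (by positivity))
      simp_rw [hofr]
      rw [lintegral_const_mul _ mgW]
    rw [p1, p3]
    rw [add_assoc]
    exact add_le_add_right (add_le_add_left p2 _) _
  calc (∫⁻ x in S ∩ Metric.ball 0 j, ENNReal.ofReal (w x ^ 2 * k1 x * Real.exp (h x)))
      + (∫⁻ x in S ∩ Metric.ball 0 j,
          ENNReal.ofReal (‖gradient w x‖ ^ 2 * k2 x * Real.exp (h x)))
      ≤ (∫⁻ x in S, ENNReal.ofReal (v x ^ 2 * k1 x * Real.exp (h x)))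
        + (∫⁻ x in S, ENNReal.ofReal (‖gradient v x‖ ^ 2 * k2 x * Real.exp (h x))) :=
      add_le_add hAj hBj
    _ ≤ ∫⁻ x in S, ENNReal.ofReal ((lapl v x) ^ 2 * Real.exp (h x)) := hcar
    _ ≤ ENNReal.ofReal 3 * Cint
        + (ENNReal.ofReal (c₁ / R ^ 2) * GR R + ENNReal.ofReal (c₂ / R ^ 4) * Wint) := hupper
end

section
/- Let n ≥ 2, r0 > 0, 1 ≤ β ≤ 2, and C1, C2 ≥ 0. Let u ∈ C²((r0,∞)) satisfy |u''(r) + (n−1)·coth(r)·u'(r)| ≤ C1 r^{(3β−3)/2} |u(r)| + C2 r^{(β−1)/2} |u'(r)| for all r > r0. If for every τ > 0 there is a constant C_τ such that |u(r)| ≤ C_τ e^{−τ r^β} for all r > r0, then u ≡ 0 on (r0+1, ∞). -/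
open MeasureTheory Filter Real Set Asymptotics

open Topology

/-!
On `[r, ξ]` with `1 ≤ r`, the rescaled pair `(Λ u, u')`, `Λ = ξ ^ ((3β - 3)/4)`, satisfies a
first-order linear differential inequality with constant `O(Λ)` (the weights are at most `Λ²`
and `Λ`, and `coth ≤ 2`), so Gronwall run backwards from `ξ` gives
`|u r| ≤ (|u ξ| + |u' ξ|) exp (c ξ^β)`. The mean value theorem yields `ξ ∈ (x, x + 1)` at which
`u` and `u'` both inherit the decay `exp (-τ x^β)`; choosing `τ > c 2^β` and letting `x → ∞`
forces `u r = 0`.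
-/

theorem norm_le_norm_right_mul_exp_of_norm_deriv_le {E : Type*} [NormedAddCommGroup E]
    [NormedSpace ℝ E] {g g' : ℝ → E} {K a b : ℝ} (hab : a ≤ b)
    (hg : ∀ t ∈ Icc a b, HasDerivAt g (g' t) t)
    (bound : ∀ t ∈ Icc a b, ‖g' t‖ ≤ K * ‖g t‖) :
    ‖g a‖ ≤ ‖g b‖ * exp (K * (b - a)) := by
  have hmem : ∀ t ∈ Icc a b, a + b - t ∈ Icc a b := fun t ht =>
    ⟨by linarith [ht.2], by linarith [ht.1]⟩
  have hrev : ∀ t ∈ Icc a b, HasDerivAt (fun t => g (a + b - t)) (-g' (a + b - t)) t :=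
    fun t ht => (hg _ (hmem t ht)).comp_const_sub (a + b) t
  have := norm_le_gronwallBound_of_norm_deriv_right_le (δ := ‖g b‖) (ε := 0)
    (fun t ht => (hrev t ht).continuousAt.continuousWithinAt)
    (fun t ht => (hrev t (Ico_subset_Icc_self ht)).hasDerivWithinAt) (by simp)
    (fun t ht => by simpa using bound _ (hmem t (Ico_subset_Icc_self ht))) b ⟨hab, le_rfl⟩
  simpa [gronwallBound_ε0] using this

theorem abs_le_mul_exp_of_abs_deriv2_le {f f' f'' : ℝ → ℝ} {a b A B Λ : ℝ} (hab : a ≤ b)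
    (hA : 0 ≤ A) (hB : 0 ≤ B) (hΛ : 0 < Λ)
    (hf : ∀ t ∈ Icc a b, HasDerivAt f (f' t) t) (hf' : ∀ t ∈ Icc a b, HasDerivAt f' (f'' t) t)
    (bound : ∀ t ∈ Icc a b, |f'' t| ≤ A * Λ ^ 2 * |f t| + B * Λ * |f' t|) :
    Λ * |f a| ≤ (Λ * |f b| + |f' b|) * exp ((A + B + 1) * Λ * (b - a)) := by
  set g : ℝ → ℝ × ℝ := fun t => (Λ * f t, f' t)
  have hg : ∀ t, ‖g t‖ = max (Λ * |f t|) |f' t| := fun t => by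
    simp [g, Prod.norm_def, abs_of_pos hΛ]
  have hg' : ∀ t ∈ Icc a b, ‖((Λ * f' t, f'' t) : ℝ × ℝ)‖ ≤ (A + B + 1) * Λ * ‖g t‖ := by
    intro t ht
    have hf_le : Λ * |f t| ≤ ‖g t‖ := (hg t).ge.trans' (le_max_left _ _)
    have hf'_le : |f' t| ≤ ‖g t‖ := (hg t).ge.trans' (le_max_right _ _)
    have hpos : 0 ≤ Λ * ‖g t‖ := by positivity
    rw [Prod.norm_def, Real.norm_eq_abs, Real.norm_eq_abs, abs_mul, abs_of_pos hΛ]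
    refine max_le (by nlinarith) ?_
    calc |f'' t| ≤ A * Λ * (Λ * |f t|) + B * Λ * |f' t| := by linarith [bound t ht]
      _ ≤ A * Λ * ‖g t‖ + B * Λ * ‖g t‖ := by gcongr
      _ ≤ (A + B + 1) * Λ * ‖g t‖ := by nlinarith
  calc Λ * |f a| ≤ ‖g a‖ := (hg a).ge.trans' (le_max_left _ _)
    _ ≤ ‖g b‖ * exp ((A + B + 1) * Λ * (b - a)) :=
      norm_le_norm_right_mul_exp_of_norm_deriv_le hab
        (fun t ht => ((hf t ht).const_mul Λ).prodMk (hf' t ht)) hg'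
    _ ≤ (Λ * |f b| + |f' b|) * exp ((A + B + 1) * Λ * (b - a)) := by
      gcongr
      rw [hg]
      exact max_le (le_add_of_nonneg_right (abs_nonneg _)) (le_add_of_nonneg_left (by positivity))

theorem abs_cosh_div_sinh_le_two {t : ℝ} (ht : 1 ≤ t) : |cosh t / sinh t| ≤ 2 := by
  have hsinh : 1 < sinh t := ht.trans_lt (self_lt_sinh_iff.2 (by linarith))
  have hexp : exp (-t) ≤ 1 := exp_le_one_iff.2 (by linarith)
  rw [abs_of_pos (by positivity), div_le_iff₀ (by positivity), ← sub_add_cancel (cosh t) (sinh t),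
    cosh_sub_sinh]
  linarith

theorem abs_deriv2_le_of_radial {u : ℝ → ℝ} {m β C1 C2 s ξ : ℝ} (hβ : 1 ≤ β)
    (hC1 : 0 ≤ C1) (hC2 : 0 ≤ C2) (hs : 1 ≤ s) (hsξ : s ≤ ξ)
    (h : |deriv (deriv u) s + m * (cosh s / sinh s) * deriv u s| ≤
      C1 * s ^ ((3 * β - 3) / 2) * |u s| + C2 * s ^ ((β - 1) / 2) * |deriv u s|) :
    |deriv (deriv u) s| ≤ C1 * (ξ ^ ((3 * β - 3) / 4)) ^ 2 * |u s| +
      (C2 + 2 * |m|) * ξ ^ ((3 * β - 3) / 4) * |deriv u s| := by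
  have hs0 : 0 ≤ s := by linarith
  have hΛ1 : 1 ≤ ξ ^ ((3 * β - 3) / 4) := one_le_rpow (hs.trans hsξ) (by linarith)
  have hpow2 : s ^ ((3 * β - 3) / 2) ≤ (ξ ^ ((3 * β - 3) / 4)) ^ 2 := by
    rw [← rpow_mul_natCast (by linarith)]
    exact rpow_le_rpow hs0 hsξ (by linarith) |>.trans_eq (by ring_nf)
  have hpow1 : s ^ ((β - 1) / 2) ≤ ξ ^ ((3 * β - 3) / 4) :=
    (rpow_le_rpow_of_exponent_le hs (by linarith)).trans (rpow_le_rpow hs0 hsξ (by linarith))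
  have hcoth : |m * (cosh s / sinh s) * deriv u s| ≤ 2 * |m| * |deriv u s| := by
    rw [abs_mul, abs_mul, mul_comm 2]
    gcongr
    exact abs_cosh_div_sinh_le_two hs
  calc |deriv (deriv u) s|
      ≤ |deriv (deriv u) s + m * (cosh s / sinh s) * deriv u s| +
          |m * (cosh s / sinh s) * deriv u s| := by
        simpa using abs_sub (deriv (deriv u) s + m * (cosh s / sinh s) * deriv u s)
          (m * (cosh s / sinh s) * deriv u s)
    _ ≤ C1 * s ^ ((3 * β - 3) / 2) * |u s| + C2 * s ^ ((β - 1) / 2) * |deriv u s| +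
          2 * |m| * |deriv u s| := add_le_add h hcoth
    _ ≤ _ := by
      set Λ := ξ ^ ((3 * β - 3) / 4)
      have t1 : C1 * s ^ ((3 * β - 3) / 2) * |u s| ≤ C1 * Λ ^ 2 * |u s| := by gcongr
      have t2 : C2 * s ^ ((β - 1) / 2) * |deriv u s| ≤ C2 * Λ * |deriv u s| := by gcongr
      have t3 : 2 * |m| * |deriv u s| ≤ 2 * |m| * Λ * |deriv u s| := by
        exact mul_le_mul_of_nonneg_right (le_mul_of_one_le_right (by positivity) hΛ1) (abs_nonneg _)
      linarith

theorem hasDerivAt_deriv_of_contDiffOn_two {u : ℝ → ℝ} {s : Set ℝ} (hu : ContDiffOn ℝ 2 u s)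
    (hs : IsOpen s) {x : ℝ} (hx : x ∈ s) :
    HasDerivAt u (deriv u x) x ∧ HasDerivAt (deriv u) (deriv (deriv u) x) x :=
  ⟨((hu.differentiableOn (by norm_num)).differentiableAt (hs.mem_nhds hx)).hasDerivAt,
    (((hu.deriv_of_isOpen hs (by norm_num) : ContDiffOn ℝ 1 (deriv u) s).differentiableOn
      (by norm_num)).differentiableAt (hs.mem_nhds hx)).hasDerivAt⟩

theorem abs_le_mul_exp_of_radial {u : ℝ → ℝ} {m r0 β C1 C2 : ℝ} (hβ : 1 ≤ β)
    (hC1 : 0 ≤ C1) (hC2 : 0 ≤ C2) (hu : ContDiffOn ℝ 2 u (Ioi r0))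
    (hineq : ∀ s ∈ Ioi r0, |deriv (deriv u) s + m * (cosh s / sinh s) * deriv u s| ≤
      C1 * s ^ ((3 * β - 3) / 2) * |u s| + C2 * s ^ ((β - 1) / 2) * |deriv u s|)
    {r ξ : ℝ} (hr0 : r0 < r) (hr1 : 1 ≤ r) (hrξ : r ≤ ξ) :
    |u r| ≤ (|u ξ| + |deriv u ξ|) * exp ((C1 + (C2 + 2 * |m|) + 1) * ξ ^ β) := by
  set Λ := ξ ^ ((3 * β - 3) / 4)
  have hξ1 : 1 ≤ ξ := hr1.trans hrξ
  have hΛ1 : 1 ≤ Λ := one_le_rpow hξ1 (by linarith)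
  have hIoi : ∀ t ∈ Icc r ξ, t ∈ Ioi r0 := fun t ht => hr0.trans_le ht.1
  have hgron := abs_le_mul_exp_of_abs_deriv2_le hrξ hC1 (by positivity) (by positivity)
    (fun t ht => (hasDerivAt_deriv_of_contDiffOn_two hu isOpen_Ioi (hIoi t ht)).1)
    (fun t ht => (hasDerivAt_deriv_of_contDiffOn_two hu isOpen_Ioi (hIoi t ht)).2)
    (fun t ht => abs_deriv2_le_of_radial hβ hC1 hC2 (hr1.trans ht.1) ht.2 (hineq t (hIoi t ht)))
  have hexp : Λ * (ξ - r) ≤ ξ ^ β := by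
    calc Λ * (ξ - r) ≤ Λ * ξ := by gcongr; linarith
      _ = ξ ^ ((3 * β - 3) / 4 + 1) := (rpow_add_one (by positivity) _).symm
      _ ≤ ξ ^ β := rpow_le_rpow_of_exponent_le hξ1 (by linarith)
  refine le_of_mul_le_mul_left ?_ (by positivity : 0 < Λ)
  calc Λ * |u r| ≤ (Λ * |u ξ| + |deriv u ξ|) * exp ((C1 + (C2 + 2 * |m|) + 1) * Λ * (ξ - r)) :=
        hgron
    _ ≤ Λ * ((|u ξ| + |deriv u ξ|) * exp ((C1 + (C2 + 2 * |m|) + 1) * ξ ^ β)) := by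
      rw [← mul_assoc, mul_add, mul_assoc _ Λ]
      gcongr
      exact le_mul_of_one_le_left (abs_nonneg _) hΛ1

theorem exists_abs_add_abs_deriv_le {u : ℝ → ℝ} {r0 C τ β x : ℝ} (hτ : 0 ≤ τ) (hβ : 0 ≤ β)
    (hu : DifferentiableOn ℝ u (Ioi r0))
    (hdecay : ∀ y ∈ Ioi r0, |u y| ≤ C * exp (-τ * y ^ β)) (hx : r0 < x) (hx0 : 0 ≤ x) :
    ∃ ξ ∈ Ioo x (x + 1), |u ξ| + |deriv u ξ| ≤ 3 * C * exp (-τ * x ^ β) := by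
  have hIoi : ∀ y ∈ Icc x (x + 1), y ∈ Ioi r0 := fun y hy => hx.trans_le hy.1
  have hC : 0 ≤ C :=
    (mul_nonneg_iff_of_pos_right (exp_pos _)).1 ((abs_nonneg _).trans (hdecay x hx))
  have hsmall : ∀ y ∈ Icc x (x + 1), |u y| ≤ C * exp (-τ * x ^ β) := fun y hy =>
    (hdecay y (hIoi y hy)).trans <| mul_le_mul_of_nonneg_left (exp_le_exp.2 <| by
      have := rpow_le_rpow hx0 hy.1 hβ
      nlinarith) hC
  have hderiv : ∀ y ∈ Ioo x (x + 1), HasDerivAt u (deriv u y) y := fun y hy =>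
    ((hu y (hIoi y (Ioo_subset_Icc_self hy))).differentiableAt (isOpen_Ioi.mem_nhds
      (hIoi y (Ioo_subset_Icc_self hy)))).hasDerivAt
  obtain ⟨ξ, hξ, hslope⟩ := exists_hasDerivAt_eq_slope u (deriv u) (lt_add_one x)
    (fun y hy => (hu y (hIoi y hy)).continuousWithinAt.mono (fun z hz => hIoi z hz)) hderiv
  refine ⟨ξ, hξ, ?_⟩
  rw [hslope, add_sub_cancel_left, div_one]
  have := abs_sub (u (x + 1)) (u x)
  linarith [hsmall ξ (Ioo_subset_Icc_self hξ), hsmall (x + 1) ⟨by linarith, le_rfl⟩,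
    hsmall x ⟨le_rfl, by linarith⟩]

theorem stmt_10_general
    (n : ℕ) (r0 : ℝ) (hr0 : 0 < r0)
    (β : ℝ) (hβ1 : 1 ≤ β) (C1 C2 : ℝ) (hC1 : 0 ≤ C1) (hC2 : 0 ≤ C2)
    (u : ℝ → ℝ) (hu : ContDiffOn ℝ 2 u (Ioi r0))
    (hineq : ∀ r ∈ Ioi r0,
      |deriv (deriv u) r + ((n : ℝ) - 1) * (Real.cosh r / Real.sinh r) * deriv u r| ≤
        C1 * r ^ ((3 * β - 3) / 2) * |u r| + C2 * r ^ ((β - 1) / 2) * |deriv u r|)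
    (hdecay : ∀ τ > (0 : ℝ), ∃ Cτ : ℝ, ∀ r ∈ Ioi r0,
      |u r| ≤ Cτ * Real.exp (-τ * r ^ β)) :
    ∀ r, r0 + 1 < r → u r = 0 := by
  intro r hr
  set c := C1 + (C2 + 2 * |(n : ℝ) - 1|) + 1
  obtain ⟨C, hC⟩ := hdecay (c * 2 ^ β + 1) (by positivity)
  have key : ∀ x ≥ r, |u r| ≤ 3 * C * exp (-x ^ β) := by
    intro x hx
    obtain ⟨ξ, hξ, hsmall⟩ := exists_abs_add_abs_deriv_le (by positivity) (by linarith)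
      (hu.differentiableOn (by norm_num)) hC (by linarith) (by linarith)
    have hξβ : ξ ^ β ≤ 2 ^ β * x ^ β := by
      rw [← mul_rpow (by norm_num) (by linarith)]
      exact rpow_le_rpow (by linarith [hξ.1]) (by linarith [hξ.2]) (by linarith)
    calc |u r| ≤ (|u ξ| + |deriv u ξ|) * exp (c * ξ ^ β) :=
          abs_le_mul_exp_of_radial hβ1 hC1 hC2 hu hineq (by linarith) (by linarith)
            (by linarith [hξ.1])
      _ ≤ 3 * C * exp (-(c * 2 ^ β + 1) * x ^ β) * exp (c * (2 ^ β * x ^ β)) :=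
          mul_le_mul hsmall (exp_le_exp.2 (mul_le_mul_of_nonneg_left hξβ (by positivity)))
            (by positivity) ((add_nonneg (abs_nonneg _) (abs_nonneg _)).trans hsmall)
      _ = 3 * C * exp (-x ^ β) := by rw [mul_assoc, ← exp_add]; ring_nf
  have hlim : Tendsto (fun x => 3 * C * exp (-x ^ β)) atTop (𝓝 0) := by
    simpa using ((tendsto_exp_neg_atTop_nhds_zero.comp
      (tendsto_rpow_atTop (by linarith))).const_mul (3 * C))
  exact abs_nonpos_iff.1 (ge_of_tendsto hlim ((eventually_ge_atTop r).mono key))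

/-- The one-dimensional (radial) case of Corollary 6.2 a) of the paper on hyperbolic
conical ends: the radial hyperbolic Laplacian is L u = u'' + (n−1)·coth(r)·u'. -/
theorem stmt_10
    (n : ℕ) (hn : 2 ≤ n) (r0 : ℝ) (hr0 : 0 < r0)
    (β : ℝ) (hβ1 : 1 ≤ β) (hβ2 : β ≤ 2) (C1 C2 : ℝ) (hC1 : 0 ≤ C1) (hC2 : 0 ≤ C2)
    (u : ℝ → ℝ) (hu : ContDiffOn ℝ 2 u (Ioi r0))
    (hineq : ∀ r ∈ Ioi r0,
      |deriv (deriv u) r + ((n : ℝ) - 1) * (Real.cosh r / Real.sinh r) * deriv u r| ≤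
        C1 * r ^ ((3 * β - 3) / 2) * |u r| + C2 * r ^ ((β - 1) / 2) * |deriv u r|)
    (hdecay : ∀ τ > (0 : ℝ), ∃ Cτ : ℝ, ∀ r ∈ Ioi r0,
      |u r| ≤ Cτ * Real.exp (-τ * r ^ β)) :
    ∀ r, r0 + 1 < r → u r = 0 :=
  stmt_10_general n r0 hr0 β hβ1 C1 C2 hC1 hC2 u hu hineq hdecay
end

section
/- Let n ≥ 2, r0 > 0, β > 2, and C1, C2 ≥ 0. Let u ∈ C²((r0,∞)) satisfy |u''(r) + (n−1)·coth(r)·u'(r)| ≤ C1 r^{(3β−3)/2} |u(r)| + C2 r^{(β−1)/2} |u'(r)| for all r > r0. Assume that: (i) for every τ > 0 there is a constant C_τ such that |u(r)| ≤ C_τ e^{−τ r^β} for all r > r0; and (ii) there exists τ0 > 0 such that for every τ ≥ τ0, ∫_{r0}^{2r} u'(s)² e^{2τ s^β} sinh(s)^{n−1} ds = o(r²) as r → +∞. Then u ≡ 0 on (r0+1, ∞). -/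
open MeasureTheory Filter Real Set Asymptotics Topology

/-!
With `p = (3β - 3) / 4`, the energy `E = u'² + r^(2p) u²` satisfies `E' ≥ -K r^p E` for `r ≥ ρ > 1`:
the potential term `C₁ r^(2p) |u|` is absorbed by AM-GM, the gradient term since `(β - 1)/2 ≤ p`,
and the drift `(n - 1) coth r` is bounded by its value at `ρ`. Integrating,
`E(ρ) ≤ E(T) exp (K T^(p+1) / (p+1))` for `T ≥ ρ`. Averaging the weighted gradient energy over
`(R, 2R]` yields arbitrarily large `T` with `u'(T)² ≤ T e^(-2T^β)`, and decay with `τ = 1` gives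
`u(T)² ≤ A² e^(-2T^β)`. As `p + 1 < β`, the bound on `E(ρ)` tends to `0` along these `T`, so `u(ρ) = 0`.
-/

theorem neg_mul_le_of_abs_add_mul_le {a b c h H C1 C2 X Y : ℝ} (hC1 : 0 ≤ C1) (hC2 : 0 ≤ C2)
    (hX : 1 ≤ X) (hYX : Y ≤ X) (hh : |h| ≤ H)
    (hc : |c + h * b| ≤ C1 * X ^ 2 * |a| + C2 * Y * |b|) :
    -((C1 + 1 + 2 * C2 + 2 * H) * X) * (b ^ 2 + X ^ 2 * a ^ 2) ≤ 2 * b * c + 2 * X ^ 2 * a * b := by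
  have hH : 0 ≤ H := (abs_nonneg h).trans hh
  have hbc : -(2 * |b| * |c + h * b|) - 2 * H * b ^ 2 ≤ 2 * b * c := by
    have h1 : -(|b| * |c + h * b|) ≤ b * (c + h * b) := by rw [← abs_mul]; exact neg_abs_le _
    have h2 : h * b ^ 2 ≤ H * b ^ 2 :=
      mul_le_mul_of_nonneg_right ((le_abs_self h).trans hh) (sq_nonneg b)
    linarith
  have hab : -(2 * X ^ 2 * (|a| * |b|)) ≤ 2 * X ^ 2 * a * b := by
    have h1 : -(|a| * |b|) ≤ a * b := by rw [← abs_mul]; exact neg_abs_le _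
    nlinarith [sq_nonneg X]
  -- AM-GM: `2 X² |a| |b| ≤ X (b² + X² a²)`
  have amgm : 2 * X ^ 2 * (|a| * |b|) ≤ X * (b ^ 2 + X ^ 2 * a ^ 2) := by
    have hsq : (X * |a| - |b|) ^ 2 = X ^ 2 * a ^ 2 - 2 * X * (|a| * |b|) + b ^ 2 := by
      rw [sub_sq, mul_pow, sq_abs, sq_abs]; ring
    have := mul_nonneg (zero_le_one.trans hX) (sq_nonneg (X * |a| - |b|))
    rw [hsq] at this
    linarith
  have hcb : 2 * |b| * |c + h * b| ≤ C1 * (X * (b ^ 2 + X ^ 2 * a ^ 2)) + 2 * C2 * X * b ^ 2 := by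
    have h1 := mul_le_mul_of_nonneg_left hc (abs_nonneg b)
    have h2 : C2 * Y * b ^ 2 ≤ C2 * X * b ^ 2 := by gcongr
    have hbb : |b| * |b| = b ^ 2 := by rw [abs_mul_abs_self, sq]
    have e : |b| * (C1 * X ^ 2 * |a| + C2 * Y * |b|)
        = C1 * (X ^ 2 * (|a| * |b|)) + C2 * Y * b ^ 2 := by
      linear_combination C2 * Y * hbb
    linarith [mul_le_mul_of_nonneg_left amgm hC1]
  have hXa : 0 ≤ X * (X ^ 2 * a ^ 2) := by positivity
  nlinarith [mul_nonneg hH hXa, mul_nonneg hC2 hXa,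
    mul_le_mul_of_nonneg_left hX (mul_nonneg hH (sq_nonneg b))]

theorem cosh_div_sinh_le_of_le {ρ x : ℝ} (hρ : 0 < ρ) (hx : ρ ≤ x) :
    cosh x / sinh x ≤ cosh ρ / sinh ρ := by
  rw [div_le_div_iff₀ (sinh_pos_iff.2 (hρ.trans_le hx)) (sinh_pos_iff.2 hρ)]
  have := sinh_nonneg_iff.2 (sub_nonneg.2 hx)
  rw [sinh_sub] at this
  linarith

theorem abs_mul_cosh_div_sinh_le (c : ℝ) {ρ x : ℝ} (hρ : 0 < ρ) (hx : ρ ≤ x) :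
    |c * (cosh x / sinh x)| ≤ |c| * (cosh ρ / sinh ρ) := by
  rw [abs_mul, abs_of_pos (div_pos (cosh_pos x) (sinh_pos_iff.2 (hρ.trans_le hx)))]
  exact mul_le_mul_of_nonneg_left (cosh_div_sinh_le_of_le hρ hx) (abs_nonneg c)

theorem mul_exp_le_mul_exp_of_neg_mul_le_deriv {E G g : ℝ → ℝ} {a b : ℝ} (hab : a ≤ b)
    (hE : ∀ x ∈ Icc a b, DifferentiableAt ℝ E x) (hG : ∀ x ∈ Icc a b, HasDerivAt G (g x) x)
    (hEG : ∀ x ∈ Ioo a b, -g x * E x ≤ deriv E x) : E a * exp (G a) ≤ E b * exp (G b) := by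
  have hF : ∀ x ∈ Icc a b, HasDerivAt (fun y => E y * exp (G y))
      (deriv E x * exp (G x) + E x * (exp (G x) * g x)) x :=
    fun x hx => (hE x hx).hasDerivAt.mul (hG x hx).exp
  refine monotoneOn_of_deriv_nonneg (convex_Icc a b)
    (fun x hx => (hF x hx).continuousAt.continuousWithinAt)
    (fun x hx => ?_) (fun x hx => ?_) (left_mem_Icc.2 hab) (right_mem_Icc.2 hab) hab
  · rw [interior_Icc] at hx
    exact (hF x (Ioo_subset_Icc_self hx)).differentiableAt.differentiableWithinAt
  · rw [interior_Icc] at hx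
    rw [(hF x (Ioo_subset_Icc_self hx)).deriv,
      show deriv E x * exp (G x) + E x * (exp (G x) * g x)
        = exp (G x) * (deriv E x - -g x * E x) by ring]
    exact mul_nonneg (exp_pos _).le (sub_nonneg.2 (hEG x hx))

theorem tendsto_rpow_mul_exp_sub_rpow (s c : ℝ) {q β d : ℝ} (hβ : 0 < β) (hqβ : q < β)
    (hd : 0 < d) : Tendsto (fun x => x ^ s * exp (c * x ^ q - d * x ^ β)) atTop (𝓝 0) := by
  have hdom : Tendsto (fun x => c * x ^ q - d / 2 * x ^ β) atTop atBot := by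
    have h : Tendsto (fun x : ℝ => c * x ^ (-(β - q)) - d / 2) atTop (𝓝 (c * 0 - d / 2)) :=
      ((tendsto_rpow_neg_atTop (sub_pos.2 hqβ)).const_mul c).sub_const _
    refine ((tendsto_rpow_atTop hβ).atTop_mul_neg (by linarith) h).congr' ?_
    filter_upwards [eventually_gt_atTop 0] with x hx
    rw [mul_sub, ← mul_assoc, mul_comm (x ^ β) c, mul_assoc, ← rpow_add hx]
    ring_nf
  have hdecay : Tendsto (fun x => x ^ s * exp (-(d / 2) * x ^ β)) atTop (𝓝 0) := by
    refine ((tendsto_rpow_mul_exp_neg_mul_atTop_nhds_zero (s / β) (d / 2) (by linarith)).comp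
      (tendsto_rpow_atTop hβ)).congr' ?_
    filter_upwards [eventually_ge_atTop 0] with x hx
    simp only [Function.comp_apply, ← rpow_mul hx, mul_div_cancel₀ _ hβ.ne']
  refine (by simpa using hdecay.mul (tendsto_exp_atBot.comp hdom) :
    Tendsto (fun x => x ^ s * exp (-(d / 2) * x ^ β) * exp (c * x ^ q - d / 2 * x ^ β))
      atTop (𝓝 0)).congr fun x => ?_
  rw [mul_assoc, ← exp_add]
  ring_nf

noncomputable def energy (u : ℝ → ℝ) (p x : ℝ) : ℝ := deriv u x ^ 2 + x ^ (2 * p) * u x ^ 2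

theorem energy_nonneg (u : ℝ → ℝ) (p : ℝ) {x : ℝ} (hx : 0 ≤ x) : 0 ≤ energy u p x := by
  unfold energy; have := rpow_nonneg hx (2 * p); positivity

theorem hasDerivAt_energy {u : ℝ → ℝ} {p x : ℝ} (hu : DifferentiableAt ℝ u x)
    (hu' : DifferentiableAt ℝ (deriv u) x) (hx : 0 < x) :
    HasDerivAt (energy u p) (2 * deriv u x * deriv (deriv u) x
      + 2 * p * x ^ (2 * p - 1) * u x ^ 2 + 2 * x ^ (2 * p) * u x * deriv u x) x := by
  refine ((hu'.hasDerivAt.pow 2).add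
    ((hasDerivAt_rpow_const (p := 2 * p) (Or.inl hx.ne')).mul
      (hu.hasDerivAt.pow 2))).congr_deriv ?_
  norm_num
  ring

theorem neg_mul_energy_le_deriv_energy {u h : ℝ → ℝ} {p q C1 C2 H x : ℝ} (hC1 : 0 ≤ C1)
    (hC2 : 0 ≤ C2) (hp : 0 ≤ p) (hqp : q ≤ p) (hx : 1 ≤ x) (hu : DifferentiableAt ℝ u x)
    (hu' : DifferentiableAt ℝ (deriv u) x) (hh : |h x| ≤ H)
    (hode : |deriv (deriv u) x + h x * deriv u x| ≤
      C1 * x ^ (2 * p) * |u x| + C2 * x ^ q * |deriv u x|) :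
    -((C1 + 1 + 2 * C2 + 2 * H) * x ^ p) * energy u p x ≤ deriv (energy u p) x := by
  have hx0 : 0 < x := one_pos.trans_le hx
  have hsq : x ^ (2 * p) = (x ^ p) ^ 2 := by
    rw [mul_comm, rpow_mul hx0.le, rpow_two]
  rw [hsq] at hode
  have key := neg_mul_le_of_abs_add_mul_le hC1 hC2 (one_le_rpow hx hp)
    (rpow_le_rpow_of_exponent_le hx hqp) hh hode
  have hnn : 0 ≤ 2 * p * x ^ (2 * p - 1) * u x ^ 2 := by
    have := rpow_nonneg hx0.le (2 * p - 1); positivity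
  rw [(hasDerivAt_energy hu hu' hx0).deriv, energy, hsq]
  linarith

theorem energy_le_mul_exp {u h : ℝ → ℝ} {r0 p q C1 C2 H ρ T : ℝ} (hC1 : 0 ≤ C1)
    (hC2 : 0 ≤ C2) (hp : 0 ≤ p) (hqp : q ≤ p) (hρ : 1 ≤ ρ) (hr0ρ : r0 < ρ) (hρT : ρ ≤ T)
    (hu : ContDiffOn ℝ 2 u (Ioi r0)) (hh : ∀ x ∈ Icc ρ T, |h x| ≤ H)
    (hode : ∀ x ∈ Icc ρ T, |deriv (deriv u) x + h x * deriv u x| ≤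
      C1 * x ^ (2 * p) * |u x| + C2 * x ^ q * |deriv u x|) :
    energy u p ρ ≤ energy u p T * exp ((C1 + 1 + 2 * C2 + 2 * H) / (p + 1) * T ^ (p + 1)) := by
  set K := C1 + 1 + 2 * C2 + 2 * H
  have hdiff : ∀ x ∈ Icc ρ T, DifferentiableAt ℝ u x ∧ DifferentiableAt ℝ (deriv u) x := by
    intro x hx
    have hmem : Ioi r0 ∈ 𝓝 x := Ioi_mem_nhds (hr0ρ.trans_le hx.1)
    exact ⟨(hu.differentiableOn (by norm_num)).differentiableAt hmem,
      ((hu.deriv_of_isOpen isOpen_Ioi (m := 1) (by norm_num)).differentiableOn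
        (by norm_num)).differentiableAt hmem⟩
  have hG : ∀ x ∈ Icc ρ T, HasDerivAt (fun y => K / (p + 1) * y ^ (p + 1)) (K * x ^ p) x := by
    intro x hx
    refine ((hasDerivAt_rpow_const (p := p + 1)
      (Or.inl (one_pos.trans_le (hρ.trans hx.1)).ne')).const_mul (K / (p + 1))).congr_deriv ?_
    rw [add_sub_cancel_right]
    field_simp
  have hmono := mul_exp_le_mul_exp_of_neg_mul_le_deriv hρT
    (fun x hx => (hasDerivAt_energy (p := p) (hdiff x hx).1 (hdiff x hx).2
      (one_pos.trans_le (hρ.trans hx.1))).differentiableAt) hG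
    (fun x hx => neg_mul_energy_le_deriv_energy hC1 hC2 hp hqp (hρ.trans hx.1.le)
      (hdiff x (Ioo_subset_Icc_self hx)).1 (hdiff x (Ioo_subset_Icc_self hx)).2
      (hh x (Ioo_subset_Icc_self hx)) (hode x (Ioo_subset_Icc_self hx)))
  have hGρ : 1 ≤ exp (K / (p + 1) * ρ ^ (p + 1)) := by
    have hK : 0 ≤ K := by have := (abs_nonneg _).trans (hh ρ (left_mem_Icc.2 hρT)); positivity
    have := rpow_nonneg (zero_le_one.trans hρ) (p + 1)
    exact one_le_exp (by positivity)
  nlinarith [energy_nonneg u p (zero_le_one.trans hρ)]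

theorem exists_mem_Ioc_le_div_of_setIntegral_le {f : ℝ → ℝ} {a b c M : ℝ} (hca : c ≤ a)
    (hab : a < b) (hf : IntegrableOn f (Ioc c b)) (hf0 : ∀ x ∈ Ioc c b, 0 ≤ f x)
    (hM : ∫ x in Ioc c b, f x ≤ M) : ∃ x ∈ Ioc a b, f x ≤ M / (b - a) := by
  have hsub : Ioc a b ⊆ Ioc c b := Ioc_subset_Ioc_left hca
  obtain ⟨x, hx, hfx⟩ := exists_le_setAverage (by simp [hab]) (by simp)
    (hf.mono_set hsub)
  refine ⟨x, hx, hfx.trans ?_⟩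
  rw [setAverage_eq, Real.volume_real_Ioc_of_le hab.le, smul_eq_mul, inv_mul_eq_div]
  refine div_le_div_of_nonneg_right ?_ (by linarith)
  refine (setIntegral_mono_set hf ?_ hsub.eventuallyLE).trans hM
  exact (ae_restrict_iff' measurableSet_Ioc).2 (Eventually.of_forall hf0)

theorem exp_two_mul_rpow_le {s τ β : ℝ} (n : ℕ) (hs : 1 ≤ s) (hτ : 1 ≤ τ) :
    exp (2 * s ^ β) ≤ exp (2 * τ * s ^ β) * sinh s ^ n := by
  have hsinh : 1 ≤ sinh s := hs.trans (self_lt_sinh_iff.2 (one_pos.trans_le hs)).le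
  have := rpow_nonneg (zero_le_one.trans hs) β
  calc exp (2 * s ^ β) ≤ exp (2 * τ * s ^ β) * 1 := by rw [mul_one]; gcongr; nlinarith
    _ ≤ exp (2 * τ * s ^ β) * sinh s ^ n := by gcongr; exact one_le_pow₀ hsinh

theorem exists_gt_energy_le {u : ℝ → ℝ} {n : ℕ} {r0 R τ β p A : ℝ} (hr0 : 0 ≤ r0)
    (hr0R : r0 ≤ R) (hR : 1 ≤ R) (hτ : 1 ≤ τ)
    (hdecay : ∀ x ∈ Ioi r0, |u x| ≤ A * exp (-x ^ β))
    (hint : IntegrableOn (fun s => deriv u s ^ 2 * exp (2 * τ * s ^ β) * sinh s ^ (n - 1))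
      (Ioc r0 (2 * R)))
    (hgrad : ∫ s in Ioc r0 (2 * R), deriv u s ^ 2 * exp (2 * τ * s ^ β) * sinh s ^ (n - 1)
      ≤ R ^ 2) :
    ∃ T, R < T ∧ energy u p T ≤ (T + A ^ 2 * T ^ (2 * p)) * exp (-(2 * T ^ β)) := by
  obtain ⟨T, ⟨hRT, -⟩, hT⟩ := exists_mem_Ioc_le_div_of_setIntegral_le hr0R (by linarith)
    hint (fun s hs => by
      have := sinh_pos_iff.2 (hr0.trans_lt hs.1); positivity) hgrad
  rw [show R ^ 2 / (2 * R - R) = R by field_simp; ring] at hT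
  have hT1 : 1 ≤ T := hR.trans hRT.le
  have hu' : deriv u T ^ 2 ≤ T * exp (-(2 * T ^ β)) := by
    have := mul_le_mul_of_nonneg_left (exp_two_mul_rpow_le (β := β) (n - 1) hT1 hτ)
      (sq_nonneg (deriv u T))
    rw [exp_neg, ← div_eq_mul_inv, le_div_iff₀ (exp_pos _)]
    linarith
  have hu : u T ^ 2 ≤ A ^ 2 * exp (-(2 * T ^ β)) := by
    have := pow_le_pow_left₀ (abs_nonneg _) (hdecay T (hr0R.trans_lt hRT)) 2
    rwa [sq_abs, mul_pow, ← exp_nat_mul, Nat.cast_ofNat, mul_neg] at this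
  refine ⟨T, hRT, ?_⟩
  have := rpow_nonneg (zero_le_one.trans hT1) (2 * p)
  unfold energy
  nlinarith

theorem tendsto_add_mul_rpow_mul_exp {p β : ℝ} (A c : ℝ) (hp : 0 ≤ p) (hpβ : p + 1 < β) :
    Tendsto (fun T => (T + A * T ^ (2 * p)) * exp (-(2 * T ^ β)) * exp (c * T ^ (p + 1)))
      atTop (𝓝 0) := by
  have h s := tendsto_rpow_mul_exp_sub_rpow s c (by linarith) hpβ two_pos
  have := (h 1).add ((h (2 * p)).const_mul A)
  rw [mul_zero, add_zero] at this
  refine this.congr fun T => ?_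
  rw [rpow_one, mul_assoc _ (exp _), ← exp_add]
  ring_nf

theorem eq_zero_of_energy_nonpos {u : ℝ → ℝ} {p x : ℝ} (hx : 0 < x) (hE : energy u p x ≤ 0) :
    u x = 0 := by
  have := rpow_pos_of_pos hx (2 * p)
  unfold energy at hE
  exact pow_eq_zero_iff two_ne_zero |>.1 <| le_antisymm
    (by nlinarith [sq_nonneg (deriv u x), sq_nonneg (u x)]) (sq_nonneg _)

theorem stmt_11_general
    (n : ℕ) (r0 : ℝ) (hr0 : 0 < r0)
    (β : ℝ) (hβ : 2 < β) (C1 C2 : ℝ) (hC1 : 0 ≤ C1) (hC2 : 0 ≤ C2)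
    (u : ℝ → ℝ) (hu : ContDiffOn ℝ 2 u (Ioi r0))
    (hineq : ∀ r ∈ Ioi r0,
      |deriv (deriv u) r + ((n : ℝ) - 1) * (Real.cosh r / Real.sinh r) * deriv u r| ≤
        C1 * r ^ ((3 * β - 3) / 2) * |u r| + C2 * r ^ ((β - 1) / 2) * |deriv u r|)
    (hdecay : ∀ τ > (0 : ℝ), ∃ Cτ : ℝ, ∀ r ∈ Ioi r0,
      |u r| ≤ Cτ * Real.exp (-τ * r ^ β))
    (hgrad : ∃ τ0 > (0 : ℝ), ∀ τ ≥ τ0,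
      (∀ᶠ r in atTop, IntegrableOn
        (fun s => deriv u s ^ 2 * Real.exp (2 * τ * s ^ β) * Real.sinh s ^ (n - 1))
        (Ioc r0 (2 * r))) ∧
      (fun r => ∫ s in Ioc r0 (2 * r),
          deriv u s ^ 2 * Real.exp (2 * τ * s ^ β) * Real.sinh s ^ (n - 1))
        =o[atTop] fun r => r ^ 2) :
    ∀ r, r0 + 1 < r → u r = 0 := by
  intro r hr
  obtain ⟨τ0, -, hτ⟩ := hgrad
  obtain ⟨hint, ho⟩ := hτ (max τ0 1) (le_max_left _ _)
  obtain ⟨A, hA⟩ := hdecay 1 one_pos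
  set p := (3 * β - 3) / 4 with hp_def
  set H := |(n : ℝ) - 1| * (cosh r / sinh r)
  rw [show (3 * β - 3) / 2 = 2 * p by ring] at hineq
  have hp : 0 ≤ p := by linarith
  have hgron (T : ℝ) (hT : r ≤ T) : energy u p r ≤
      energy u p T * exp ((C1 + 1 + 2 * C2 + 2 * H) / (p + 1) * T ^ (p + 1)) :=
    energy_le_mul_exp (h := fun x => ((n : ℝ) - 1) * (cosh x / sinh x)) hC1 hC2 hp
      (by linarith) (by linarith) (by linarith) hT hu
      (fun x hx => abs_mul_cosh_div_sinh_le _ (by linarith) hx.1)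
      (fun x hx => hineq x (by simp only [mem_Ioi]; linarith [hx.1]))
  have hlarge : ∀ᶠ R in atTop,
      ∃ T, R < T ∧ energy u p T ≤ (T + A ^ 2 * T ^ (2 * p)) * exp (-(2 * T ^ β)) := by
    filter_upwards [hint, ho.bound one_pos, eventually_ge_atTop r] with R hRint hRo hR
    refine exists_gt_energy_le hr0.le (by linarith) (by linarith) (le_max_right _ _)
      (fun x hx => by simpa using hA x hx) hRint ?_
    simpa [abs_of_nonneg (sq_nonneg R)] using (le_abs_self _).trans hRo
  have hfreq : ∃ᶠ T in atTop, energy u p r ≤ (T + A ^ 2 * T ^ (2 * p)) * exp (-(2 * T ^ β))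
      * exp ((C1 + 1 + 2 * C2 + 2 * H) / (p + 1) * T ^ (p + 1)) := by
    refine frequently_atTop.2 fun R0 => ?_
    obtain ⟨R, ⟨T, hRT, hT⟩, hR⟩ := (hlarge.and (eventually_ge_atTop (max R0 r))).exists
    refine ⟨T, by linarith [le_max_left R0 r], ?_⟩
    exact (hgron T (by linarith [le_max_right R0 r])).trans
      (mul_le_mul_of_nonneg_right hT (exp_pos _).le)
  exact eq_zero_of_energy_nonpos (by linarith) <|
    ge_of_tendsto_of_frequently (tendsto_add_mul_rpow_mul_exp _ _ hp (by linarith)) hfreq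

/-- The one-dimensional (radial) case of Corollary 6.2 b) of the paper on hyperbolic
conical ends: the regime β > 2, with an additional growth assumption on the weighted
gradient energy. The radial hyperbolic Laplacian is L u = u'' + (n−1)·coth(r)·u' and
the measure is sinh(r)^{n−1} dr. -/
theorem stmt_11
    (n : ℕ) (hn : 2 ≤ n) (r0 : ℝ) (hr0 : 0 < r0)
    (β : ℝ) (hβ : 2 < β) (C1 C2 : ℝ) (hC1 : 0 ≤ C1) (hC2 : 0 ≤ C2)
    (u : ℝ → ℝ) (hu : ContDiffOn ℝ 2 u (Ioi r0))
    (hineq : ∀ r ∈ Ioi r0,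
      |deriv (deriv u) r + ((n : ℝ) - 1) * (Real.cosh r / Real.sinh r) * deriv u r| ≤
        C1 * r ^ ((3 * β - 3) / 2) * |u r| + C2 * r ^ ((β - 1) / 2) * |deriv u r|)
    (hdecay : ∀ τ > (0 : ℝ), ∃ Cτ : ℝ, ∀ r ∈ Ioi r0,
      |u r| ≤ Cτ * Real.exp (-τ * r ^ β))
    (hgrad : ∃ τ0 > (0 : ℝ), ∀ τ ≥ τ0,
      (∀ᶠ r in atTop, IntegrableOn
        (fun s => deriv u s ^ 2 * Real.exp (2 * τ * s ^ β) * Real.sinh s ^ (n - 1))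
        (Ioc r0 (2 * r))) ∧
      (fun r => ∫ s in Ioc r0 (2 * r),
          deriv u s ^ 2 * Real.exp (2 * τ * s ^ β) * Real.sinh s ^ (n - 1))
        =o[atTop] fun r => r ^ 2) :
    ∀ r, r0 + 1 < r → u r = 0 :=
  stmt_11_general n r0 hr0 β hβ C1 C2 hC1 hC2 u hu hineq hdecay hgrad
end

section
/- Let n ≥ 2, r0 > 0, 0 < β ≤ 2, and C1, C2 ≥ 0. Let u ∈ C²((r0,∞)) satisfy |u''(r) + (n−1)·β·r^{β−1}·u'(r)| ≤ C1 r^{2β−2} |u(r)| + C2 r^{β−1} |u'(r)| for all r > r0. If for every τ > 0 there is a constant C_τ such that |u(r)| ≤ C_τ e^{−τ r^β} for all r > r0, then u ≡ 0 on (r0+1, ∞). -/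
/-!
Write `w = u' / (β r^(β-1))` for the derivative of `u` with respect to `t = r^β`. For `K` large
in terms of `β` and the constants of the differential inequality, the energy
`E = (u² + w²) e^(K r^β)` is nondecreasing on `[1, ∞)`: after factoring out `β r^(β-1)`, every
term of `E'` that could be negative is absorbed by `K (u² + w²)`. On the other hand, if
`|u| ≤ C e^(-τ r^β)` with `τ = 2^β K`, the mean value theorem on `[t, t + 1]` gives a point `ξ`
where `u` and `u'` are both `O(e^(-τ t^β))`, hence `E(ξ) = O(t² e^(-τ t^β)) → 0`. A nondecreasing
function taking such values vanishes, so `u = 0`.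
-/

open Filter Real Set Topology

noncomputable def radialEnergy (β K : ℝ) (u : ℝ → ℝ) (r : ℝ) : ℝ :=
  (u r ^ 2 + (deriv u r / (β * r ^ (β - 1))) ^ 2) * exp (K * r ^ β)

/-- The factor of `E'(r)` in front of `e^(K r^β)`, written with `U = u`, `W = w`,
`P = β r^(β-1)`, `q = u'' / P` and `s = P' / P = (β - 1) / r`. -/
lemma energy_deriv_integrand_nonneg {U W P q s c₁ c₂ c₃ K : ℝ} (hP : 0 < P) (hc₁ : 0 ≤ c₁)
    (hc₂ : 0 ≤ c₂) (hq : |q| ≤ c₁ * P * |U| + c₂ * P * |W|) (hs : |s| ≤ c₃ * P)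
    (hK : 1 + c₁ + 2 * c₂ + 2 * c₃ ≤ K) :
    0 ≤ 2 * U * (P * W) + 2 * W * (q - W * s) + K * P * (U ^ 2 + W ^ 2) := by
  have hc₃ : 0 ≤ c₃ := nonneg_of_mul_nonneg_left ((abs_nonneg s).trans hs) hP
  have hUW : -(U ^ 2 + W ^ 2) ≤ 2 * U * W := by nlinarith [sq_nonneg (U + W)]
  have hUW' : 2 * |U| * |W| ≤ U ^ 2 + W ^ 2 := by
    nlinarith [sq_nonneg (|U| - |W|), sq_abs U, sq_abs W]
  have hWq : -(2 * |W| * (c₁ * P * |U| + c₂ * P * |W|)) ≤ 2 * W * q := by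
    have := mul_le_mul_of_nonneg_left hq (by positivity : (0 : ℝ) ≤ 2 * |W|)
    have := neg_abs_le (2 * W * q)
    rw [abs_mul, abs_mul, abs_two] at this
    linarith
  have hWs : W ^ 2 * s ≤ W ^ 2 * (c₃ * P) :=
    mul_le_mul_of_nonneg_left ((le_abs_self s).trans hs) (sq_nonneg W)
  have hKP : (1 + c₁ + 2 * c₂ + 2 * c₃) * P * (U ^ 2 + W ^ 2) ≤ K * P * (U ^ 2 + W ^ 2) := by
    gcongr
  have hWW : |W| * |W| = W ^ 2 := by rw [← sq, sq_abs]
  have h1 := mul_le_mul_of_nonneg_left hUW' (mul_nonneg hc₁ hP.le)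
  have h2 := mul_le_mul_of_nonneg_left hUW hP.le
  have h3 := mul_nonneg (mul_nonneg hc₂ hP.le) (sq_nonneg U)
  have h4 := mul_nonneg (mul_nonneg hc₃ hP.le) (sq_nonneg U)
  have hsplit : 2 * |W| * (c₁ * P * |U| + c₂ * P * |W|) =
      c₁ * P * (2 * |U| * |W|) + 2 * c₂ * P * W ^ 2 := by
    rw [← hWW]; ring
  linarith

lemma hasDerivAt_radialEnergy {β K x P W D : ℝ} {u : ℝ → ℝ} (hβ : 0 < β) (hx : 0 < x)
    (hP : β * x ^ (β - 1) = P) (hW : deriv u x = P * W)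
    (hu : HasDerivAt u (deriv u x) x) (hu' : HasDerivAt (deriv u) D x) :
    HasDerivAt (radialEnergy β K u)
      ((2 * u x * (P * W) + 2 * W * (D / P - W * ((β - 1) / x)) + K * P * (u x ^ 2 + W ^ 2)) *
        exp (K * x ^ β)) x := by
  have hP0 : P ≠ 0 := hP ▸ (by positivity)
  have hweight : HasDerivAt (fun r ↦ β * r ^ (β - 1)) (P * ((β - 1) / x)) x := by
    refine ((hasDerivAt_rpow_const (p := β - 1) (Or.inl hx.ne')).const_mul β).congr_deriv ?_
    rw [← hP, rpow_sub_one hx.ne']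
    field_simp
  have hw := hu'.div hweight (hP ▸ hP0)
  have hexp := ((hasDerivAt_rpow_const (p := β) (Or.inl hx.ne')).const_mul K).exp
  refine (((hu.pow 2).add (hw.pow 2)).mul hexp).congr_deriv ?_
  simp only [Pi.add_apply, Pi.pow_apply, Pi.div_apply]
  rw [hP, hW]
  field_simp
  ring

lemma exists_hasDerivAt_radialEnergy_nonneg {β A B K x : ℝ} {u : ℝ → ℝ} (hβ : 0 < β)
    (hA : 0 ≤ A) (hB : 0 ≤ B) (hK : 1 + A / β ^ 2 + 2 * (B / β) + 2 * (|β - 1| / β) ≤ K)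
    (hx : 1 ≤ x) (hu : HasDerivAt u (deriv u x) x)
    (hu' : HasDerivAt (deriv u) (deriv (deriv u) x) x)
    (hode : |deriv (deriv u) x| ≤ A * x ^ (2 * β - 2) * |u x| + B * x ^ (β - 1) * |deriv u x|) :
    ∃ g, 0 ≤ g ∧ HasDerivAt (radialEnergy β K u) g x := by
  have hx0 : 0 < x := by linarith
  set P := β * x ^ (β - 1) with hP
  have hP0 : 0 < P := by positivity
  set W := deriv u x / P
  have hW : deriv u x = P * W := (mul_div_cancel₀ _ hP0.ne').symm
  refine ⟨_, mul_nonneg ?_ (exp_pos _).le, hasDerivAt_radialEnergy hβ hx0 hP.symm hW hu hu'⟩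
  have hPx : P * x = β * x ^ β := by
    rw [hP, mul_assoc, ← rpow_add_one hx0.ne', sub_add_cancel]
  refine energy_deriv_integrand_nonneg (c₁ := A / β ^ 2) (c₂ := B / β) (c₃ := |β - 1| / β) hP0
    (by positivity) (by positivity) ?_ ?_ (by linarith)
  · rw [abs_div, abs_of_pos hP0, div_le_iff₀ hP0]
    have h2 : x ^ (2 * β - 2) = (P / β) ^ 2 := by
      rw [hP, mul_div_cancel_left₀ _ hβ.ne', ← rpow_natCast, ← rpow_mul hx0.le]; ring_nf
    calc |deriv (deriv u) x| ≤ A * x ^ (2 * β - 2) * |u x| + B * x ^ (β - 1) * |deriv u x| := hode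
      _ = (A / β ^ 2 * P * |u x| + B / β * P * |W|) * P := by
        rw [h2, hW, abs_mul, abs_of_pos hP0, hP]; field_simp
  · rw [abs_div, abs_of_pos hx0, div_le_iff₀ hx0, mul_assoc, hPx]
    calc |β - 1| ≤ |β - 1| * x ^ β := le_mul_of_one_le_right (abs_nonneg _) (one_le_rpow hx hβ.le)
      _ = |β - 1| / β * (β * x ^ β) := by field_simp

lemma monotoneOn_radialEnergy {β A B K r0 a : ℝ} {u : ℝ → ℝ} (hβ : 0 < β) (hA : 0 ≤ A)
    (hB : 0 ≤ B) (hK : 1 + A / β ^ 2 + 2 * (B / β) + 2 * (|β - 1| / β) ≤ K)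
    (hu : ∀ x ∈ Ioi r0, HasDerivAt u (deriv u x) x)
    (hu' : ∀ x ∈ Ioi r0, HasDerivAt (deriv u) (deriv (deriv u) x) x)
    (hode : ∀ x ∈ Ioi r0,
      |deriv (deriv u) x| ≤ A * x ^ (2 * β - 2) * |u x| + B * x ^ (β - 1) * |deriv u x|)
    (ha0 : r0 < a) (ha : 1 ≤ a) :
    MonotoneOn (radialEnergy β K u) (Ici a) := by
  have hE : ∀ x ∈ Ici a, ∃ g, 0 ≤ g ∧ HasDerivAt (radialEnergy β K u) g x := fun x hx ↦
    have hx0 : x ∈ Ioi r0 := ha0.trans_le hx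
    exists_hasDerivAt_radialEnergy_nonneg hβ hA hB hK (ha.trans hx) (hu x hx0) (hu' x hx0)
      (hode x hx0)
  choose! g hg0 hg using hE
  refine monotoneOn_of_hasDerivWithinAt_nonneg (f' := g) (convex_Ici a)
    (fun x hx ↦ (hg x hx).continuousAt.continuousWithinAt) (fun x hx ↦ ?_) (fun x hx ↦ ?_)
  · exact (hg x (interior_subset hx)).hasDerivWithinAt
  · exact hg0 x (interior_subset hx)

lemma exists_abs_deriv_le_two_mul {u : ℝ → ℝ} {r M : ℝ}
    (hu : ∀ x ∈ Icc r (r + 1), HasDerivAt u (deriv u x) x) (hM : ∀ x ∈ Icc r (r + 1), |u x| ≤ M) :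
    ∃ ξ ∈ Ioo r (r + 1), |deriv u ξ| ≤ 2 * M := by
  obtain ⟨ξ, hξ, hslope⟩ := exists_hasDerivAt_eq_slope u (deriv u) (lt_add_one r)
    (fun x hx ↦ (hu x hx).continuousAt.continuousWithinAt)
    (fun x hx ↦ hu x (Ioo_subset_Icc_self hx))
  refine ⟨ξ, hξ, ?_⟩
  rw [hslope, add_sub_cancel_left, div_one]
  calc |u (r + 1) - u r| ≤ |u (r + 1)| + |u r| := abs_sub _ _
    _ ≤ 2 * M := by
      linarith [hM (r + 1) ⟨by linarith, le_rfl⟩, hM r ⟨le_rfl, by linarith⟩]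

lemma radialEnergy_le {β K ξ M : ℝ} {u : ℝ → ℝ} (hβ : 0 < β) (hξ : 1 ≤ ξ) (hu : |u ξ| ≤ M)
    (hu' : |deriv u ξ| ≤ 2 * M) :
    radialEnergy β K u ξ ≤ M ^ 2 * (1 + 4 * ξ ^ 2 / β ^ 2) * exp (K * ξ ^ β) := by
  have hξ0 : 0 < ξ := by linarith
  have hM : 0 ≤ M := (abs_nonneg _).trans hu
  have hP : 0 < β * ξ ^ (β - 1) := by positivity
  have hw : |deriv u ξ / (β * ξ ^ (β - 1))| ≤ 2 * M * ξ / β := by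
    rw [abs_div, abs_of_pos hP, div_le_div_iff₀ hP hβ]
    calc |deriv u ξ| * β ≤ 2 * M * β * 1 := by nlinarith
      _ ≤ 2 * M * β * ξ ^ β := by gcongr; exact one_le_rpow hξ hβ.le
      _ = 2 * M * ξ * (β * ξ ^ (β - 1)) := by
        rw [rpow_sub_one hξ0.ne']; field_simp
  have hu2 : u ξ ^ 2 ≤ M ^ 2 := by rw [← sq_abs]; exact pow_le_pow_left₀ (abs_nonneg _) hu 2
  have hw2 : (deriv u ξ / (β * ξ ^ (β - 1))) ^ 2 ≤ (2 * M * ξ / β) ^ 2 := by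
    rw [← sq_abs]; exact pow_le_pow_left₀ (abs_nonneg _) hw 2
  unfold radialEnergy
  gcongr
  calc u ξ ^ 2 + (deriv u ξ / (β * ξ ^ (β - 1))) ^ 2 ≤ M ^ 2 + (2 * M * ξ / β) ^ 2 := by linarith
    _ = M ^ 2 * (1 + 4 * ξ ^ 2 / β ^ 2) := by ring

lemma tendsto_rpow_mul_exp_neg_mul_rpow_atTop_nhds_zero (s : ℝ) {β τ : ℝ} (hβ : 0 < β)
    (hτ : 0 < τ) : Tendsto (fun x : ℝ ↦ x ^ s * exp (-τ * x ^ β)) atTop (𝓝 0) := by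
  refine ((tendsto_rpow_mul_exp_neg_mul_atTop_nhds_zero (s / β) τ hτ).comp
    (tendsto_rpow_atTop hβ)).congr' ?_
  filter_upwards [eventually_ge_atTop 0] with x hx
  simp only [Function.comp_apply, ← rpow_mul hx, mul_div_cancel₀ _ hβ.ne']

lemma exists_mem_Ioo_radialEnergy_le {β K C r0 t : ℝ} {u : ℝ → ℝ} (hβ : 0 < β) (hK : 0 ≤ K)
    (hu : ∀ x ∈ Ioi r0, HasDerivAt u (deriv u x) x)
    (hC : ∀ x ∈ Ioi r0, |u x| ≤ C * exp (-(2 ^ β * K) * x ^ β)) (ht0 : r0 < t) (ht : 1 ≤ t) :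
    ∃ ξ ∈ Ioo t (t + 1), radialEnergy β K u ξ ≤
      C ^ 2 * (1 + 16 / β ^ 2) * (t ^ (2 : ℝ) * exp (-(2 ^ β * K) * t ^ β)) := by
  set τ := 2 ^ β * K
  have hsub : Icc t (t + 1) ⊆ Ioi r0 := fun x hx ↦ ht0.trans_le hx.1
  have hC0 : 0 ≤ C := nonneg_of_mul_nonneg_left ((abs_nonneg _).trans (hC t ht0)) (exp_pos _)
  set M := C * exp (-τ * t ^ β)
  have hM : ∀ x ∈ Icc t (t + 1), |u x| ≤ M := fun x hx ↦ by
    refine (hC x (hsub hx)).trans ?_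
    have : t ^ β ≤ x ^ β := rpow_le_rpow (by linarith) hx.1 hβ.le
    exact mul_le_mul_of_nonneg_left (exp_le_exp.2 (by nlinarith [show 0 ≤ τ by positivity])) hC0
  obtain ⟨ξ, hξ, hξ'⟩ := exists_abs_deriv_le_two_mul (fun x hx ↦ hu x (hsub hx)) hM
  have hξ1 : 1 ≤ ξ := by linarith [hξ.1]
  refine ⟨ξ, hξ, (radialEnergy_le hβ hξ1 (hM ξ (Ioo_subset_Icc_self hξ)) hξ').trans ?_⟩
  have hξt : ξ ≤ 2 * t := by linarith [hξ.2]
  have hexp : K * ξ ^ β ≤ τ * t ^ β := by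
    calc K * ξ ^ β ≤ K * (2 * t) ^ β :=
          mul_le_mul_of_nonneg_left (rpow_le_rpow (by linarith) hξt hβ.le) hK
      _ = τ * t ^ β := by rw [mul_rpow zero_le_two (by linarith)]; ring
  have hpoly : 1 + 4 * ξ ^ 2 / β ^ 2 ≤ (1 + 16 / β ^ 2) * t ^ (2 : ℝ) := by
    rw [rpow_two]
    have : 4 * ξ ^ 2 / β ^ 2 ≤ 16 / β ^ 2 * t ^ 2 := by
      rw [div_mul_eq_mul_div]; exact div_le_div_of_nonneg_right (by nlinarith) (by positivity)
    nlinarith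
  calc M ^ 2 * (1 + 4 * ξ ^ 2 / β ^ 2) * exp (K * ξ ^ β)
      ≤ C ^ 2 * exp (-τ * t ^ β) ^ 2 * ((1 + 16 / β ^ 2) * t ^ (2 : ℝ)) * exp (τ * t ^ β) := by
        rw [mul_pow]; gcongr
    _ = C ^ 2 * (1 + 16 / β ^ 2) * (t ^ (2 : ℝ) * exp (-τ * t ^ β)) := by
        have hsq : exp (-τ * t ^ β) ^ 2 * exp (τ * t ^ β) = exp (-τ * t ^ β) := by
          rw [sq, ← exp_add, ← exp_add]; ring_nf
        linear_combination (C ^ 2 * ((1 + 16 / β ^ 2) * t ^ (2 : ℝ))) * hsq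

theorem eq_zero_of_abs_deriv_deriv_le {β A B r0 r : ℝ} {u : ℝ → ℝ} (hβ : 0 < β) (hA : 0 ≤ A)
    (hB : 0 ≤ B) (hu : ∀ x ∈ Ioi r0, HasDerivAt u (deriv u x) x)
    (hu' : ∀ x ∈ Ioi r0, HasDerivAt (deriv u) (deriv (deriv u) x) x)
    (hode : ∀ x ∈ Ioi r0,
      |deriv (deriv u) x| ≤ A * x ^ (2 * β - 2) * |u x| + B * x ^ (β - 1) * |deriv u x|)
    (hdecay : ∀ τ > (0 : ℝ), ∃ Cτ : ℝ, ∀ x ∈ Ioi r0, |u x| ≤ Cτ * exp (-τ * x ^ β))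
    (hr0 : r0 < r) (hr : 1 ≤ r) : u r = 0 := by
  set K := 1 + A / β ^ 2 + 2 * (B / β) + 2 * (|β - 1| / β)
  have hK : 0 < K := by positivity
  obtain ⟨C, hC⟩ := hdecay (2 ^ β * K) (by positivity)
  have hmono := monotoneOn_radialEnergy hβ hA hB le_rfl hu hu' hode hr0 hr
  by_contra hur
  have hpos : 0 < radialEnergy β K u r := by unfold radialEnergy; positivity
  have hlim := ((tendsto_rpow_mul_exp_neg_mul_rpow_atTop_nhds_zero 2 hβ
    (by positivity : 0 < 2 ^ β * K)).const_mul (C ^ 2 * (1 + 16 / β ^ 2))).eventually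
    (gt_mem_nhds (mul_zero (C ^ 2 * (1 + 16 / β ^ 2)) ▸ hpos))
  obtain ⟨t, hsmall, hrt⟩ := (hlim.and (eventually_ge_atTop r)).exists
  obtain ⟨ξ, hξ, hEξ⟩ :=
    exists_mem_Ioo_radialEnergy_le hβ hK.le hu hC (hr0.trans_le hrt) (hr.trans hrt)
  exact (hmono self_mem_Ici (mem_Ici.2 (hrt.trans hξ.1.le)) (hrt.trans hξ.1.le)).not_gt
    (hEξ.trans_lt hsmall)

theorem stmt_13_general
    (n : ℕ) (r0 : ℝ) (hr0 : 0 < r0)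
    (β : ℝ) (hβ0 : 0 < β) (C1 C2 : ℝ) (hC1 : 0 ≤ C1) (hC2 : 0 ≤ C2)
    (u : ℝ → ℝ) (hu : ContDiffOn ℝ 2 u (Ioi r0))
    (hineq : ∀ r ∈ Ioi r0,
      |deriv (deriv u) r + ((n : ℝ) - 1) * β * r ^ (β - 1) * deriv u r| ≤
        C1 * r ^ (2 * β - 2) * |u r| + C2 * r ^ (β - 1) * |deriv u r|)
    (hdecay : ∀ τ > (0 : ℝ), ∃ Cτ : ℝ, ∀ r ∈ Ioi r0,
      |u r| ≤ Cτ * Real.exp (-τ * r ^ β)) :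
    ∀ r, r0 + 1 < r → u r = 0 := by
  have hu' : ContDiffOn ℝ 1 (deriv u) (Ioi r0) := hu.deriv_of_isOpen isOpen_Ioi (by norm_num)
  have hu₁ : ∀ x ∈ Ioi r0, HasDerivAt u (deriv u x) x := fun x hx ↦
    ((hu.differentiableOn (by norm_num)).differentiableAt (isOpen_Ioi.mem_nhds hx)).hasDerivAt
  have hu₂ : ∀ x ∈ Ioi r0, HasDerivAt (deriv u) (deriv (deriv u) x) x := fun x hx ↦
    ((hu'.differentiableOn one_ne_zero).differentiableAt (isOpen_Ioi.mem_nhds hx)).hasDerivAt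
  have hode : ∀ x ∈ Ioi r0, |deriv (deriv u) x| ≤
      C1 * x ^ (2 * β - 2) * |u x| + (C2 + |((n : ℝ) - 1) * β|) * x ^ (β - 1) * |deriv u x| := by
    intro x hx
    set drift := ((n : ℝ) - 1) * β * x ^ (β - 1) * deriv u x
    have hdrift : |drift| = |((n : ℝ) - 1) * β| * x ^ (β - 1) * |deriv u x| := by
      rw [abs_mul, abs_mul, abs_of_nonneg (rpow_nonneg (hr0.trans hx).le _)]
    calc |deriv (deriv u) x| = |(deriv (deriv u) x + drift) - drift| := by ring_nf
      _ ≤ |deriv (deriv u) x + drift| + |drift| := abs_sub _ _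
      _ ≤ _ := by linarith [hineq x hx]
  intro r hr
  exact eq_zero_of_abs_deriv_deriv_le hβ0 hC1 (by positivity) hu₁ hu₂ hode hdecay (by linarith)
    (by linarith)

/-- The one-dimensional (radial) case of Corollary 6.4 b) of the paper, on warped
cylindrical ends with warping function σ(r) = e^{r^β}, 0 < β ≤ 2: the radial Laplacian
is L u = u'' + (n−1)·β·r^{β−1}·u'. -/
theorem stmt_13
    (n : ℕ) (hn : 2 ≤ n) (r0 : ℝ) (hr0 : 0 < r0)
    (β : ℝ) (hβ0 : 0 < β) (hβ2 : β ≤ 2) (C1 C2 : ℝ) (hC1 : 0 ≤ C1) (hC2 : 0 ≤ C2)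
    (u : ℝ → ℝ) (hu : ContDiffOn ℝ 2 u (Ioi r0))
    (hineq : ∀ r ∈ Ioi r0,
      |deriv (deriv u) r + ((n : ℝ) - 1) * β * r ^ (β - 1) * deriv u r| ≤
        C1 * r ^ (2 * β - 2) * |u r| + C2 * r ^ (β - 1) * |deriv u r|)
    (hdecay : ∀ τ > (0 : ℝ), ∃ Cτ : ℝ, ∀ r ∈ Ioi r0,
      |u r| ≤ Cτ * Real.exp (-τ * r ^ β)) :
    ∀ r, r0 + 1 < r → u r = 0 :=
  stmt_13_general n r0 hr0 β hβ0 C1 C2 hC1 hC2 u hu hineq hdecay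
end
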